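/- arXiv:1011.5104 — 6 statements merged into one kernel-verified Lean document; each statement's English description precedes it below -/
import Mathlib

section
/- Let p ≥ 1 and let F_1,…,F_p be probability distribution functions concentrating on (0,∞). For T > 0 let λ_1(T),…,λ_p(T) > 0, λ(T) = Σ_{j=1}^p λ_j(T), and F_{D,T} = Σ_{j=1}^p (λ_j(T)/λ(T)) F_j. With b_{D,T}(t) = inf{x > 0 : F_{D,T}(x) ≥ 1 − 1/t} and b_j(t) = inf{x > 0 : F_j(x) ≥ 1 − 1/t}, the following inequalities hold for every T > 0: max_{1≤j≤p} b_j(p·λ_j(T)·T) ≥ b_{D,T}(λ(T)·T) ≥ max_{1≤j≤p} b_j(λ_j(T)·T). -/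
open MeasureTheory Filter Set
open scoped Topology

/-- Left-continuous inverse of `1/(1-F)`: `b(t) = inf{x > 0 : F(x) ≥ 1 − 1/t}`. -/
noncomputable def qtl (F : ℝ → ℝ) (t : ℝ) : ℝ :=
  sInf {x : ℝ | 0 < x ∧ 1 - 1 / t ≤ F x}

/-- The quantile of the mixture `F_{D,T}` lies between the maxima of single-stream
quantiles: `max_j b_j(p λ_j(T) T) ≥ b_{D,T}(λ(T) T) ≥ max_j b_j(λ_j(T) T)`. -/
theorem quantile_bounds
    (p : ℕ) (hp : 1 ≤ p) (F : Fin p → ℝ → ℝ)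
    (hmono : ∀ j, Monotone (F j))
    (hzero : ∀ j, F j 0 = 0)
    (hnonneg : ∀ j x, 0 ≤ F j x)
    (hle_one : ∀ j x, F j x ≤ 1)
    (htop : ∀ j, Tendsto (F j) atTop (𝓝 1))
    (lam : Fin p → ℝ → ℝ)
    (hlam : ∀ j, ∀ T > (0 : ℝ), 0 < lam j T) :
    ∀ T > (0 : ℝ),
      qtl (fun x => ∑ j, (lam j T / ∑ k, lam k T) * F j x) ((∑ j, lam j T) * T)
          ≤ ⨆ j, qtl (F j) ((p : ℝ) * lam j T * T) ∧
      (⨆ j, qtl (F j) (lam j T * T))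
          ≤ qtl (fun x => ∑ j, (lam j T / ∑ k, lam k T) * F j x) ((∑ j, lam j T) * T) := by
  intro T hT
  haveI : Nonempty (Fin p) := Fin.pos_iff_nonempty.mp hp
  have hp0 : (0:ℝ) < (p:ℝ) := by exact_mod_cast hp
  set Λ : ℝ := ∑ k, lam k T with hΛdef
  have hΛpos : 0 < Λ := Finset.sum_pos (fun j _ => hlam j T hT) Finset.univ_nonempty
  have hΛne : Λ ≠ 0 := hΛpos.ne'
  have hTne : T ≠ 0 := hT.ne'
  set G : ℝ → ℝ := fun x => ∑ j, (lam j T / Λ) * F j x with hGdef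
  have hcoef : ∀ j : Fin p, 0 ≤ lam j T / Λ := fun j => div_nonneg (hlam j T hT).le hΛpos.le
  have hcoefsum : ∑ j, lam j T / Λ = 1 := by
    rw [← Finset.sum_div, ← hΛdef, div_self hΛne]
  have hexists : ∀ c : ℝ, c < 1 → ∃ x : ℝ, 0 < x ∧ ∀ j, c ≤ F j x := by
    intro c hc
    have h1 : ∀ᶠ x : ℝ in atTop, ∀ j, c ≤ F j x := by
      rw [eventually_all]
      exact fun j => (htop j).eventually (eventually_ge_nhds hc)
    obtain ⟨x, hx0, hxj⟩ := ((eventually_gt_atTop 0).and h1).exists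
    exact ⟨x, hx0, hxj⟩
  -- nonemptiness of the mixture set
  have hSGne : Set.Nonempty {x : ℝ | 0 < x ∧ 1 - 1 / (Λ * T) ≤ G x} := by
    obtain ⟨x, hx0, hxj⟩ := hexists (1 - 1 / (Λ * T)) (by
      have : 0 < 1 / (Λ * T) := by positivity
      linarith)
    refine ⟨x, hx0, ?_⟩
    calc 1 - 1 / (Λ * T) = (∑ j, lam j T / Λ) * (1 - 1 / (Λ * T)) := by
          rw [hcoefsum, one_mul]
      _ = ∑ j, (lam j T / Λ) * (1 - 1 / (Λ * T)) := by rw [Finset.sum_mul]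
      _ ≤ G x := Finset.sum_le_sum fun j _ => mul_le_mul_of_nonneg_left (hxj j) (hcoef j)
  -- nonemptiness of single-stream sets
  have hSjne : ∀ (j : Fin p) (t : ℝ), 0 < t →
      Set.Nonempty {x : ℝ | 0 < x ∧ 1 - 1 / t ≤ F j x} := by
    intro j t ht
    obtain ⟨x, hx0, hxj⟩ := hexists (1 - 1 / t) (by
      have : 0 < 1 / t := by positivity
      linarith)
    exact ⟨x, hx0, hxj j⟩
  -- lower bound
  have hlow : ∀ j, qtl (F j) (lam j T * T) ≤ qtl G (Λ * T) := by
    intro j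
    have hl := hlam j T hT
    apply csInf_le_csInf ⟨0, fun x hx => hx.1.le⟩ hSGne
    rintro x ⟨hx0, hxG⟩
    refine ⟨hx0, ?_⟩
    have hsplit : G x ≤ (lam j T / Λ) * F j x + (1 - lam j T / Λ) := by
      have h1 : (lam j T / Λ) * F j x
          + ∑ k ∈ Finset.univ.erase j, (lam k T / Λ) * F k x = G x :=
        Finset.add_sum_erase _ (fun k => (lam k T / Λ) * F k x) (Finset.mem_univ j)
      have h2 : ∑ k ∈ Finset.univ.erase j, (lam k T / Λ) * F k x
          ≤ ∑ k ∈ Finset.univ.erase j, lam k T / Λ :=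
        Finset.sum_le_sum fun k _ => by
          calc (lam k T / Λ) * F k x ≤ (lam k T / Λ) * 1 :=
                mul_le_mul_of_nonneg_left (hle_one k x) (hcoef k)
            _ = lam k T / Λ := mul_one _
      have h3 : ∑ k ∈ Finset.univ.erase j, lam k T / Λ = 1 - lam j T / Λ := by
        rw [Finset.sum_erase_eq_sub (Finset.mem_univ j), hcoefsum]
      linarith
    have key : lam j T * (1 - F j x) ≤ 1 / T := by
      have h2 : Λ * (1 - 1 / (Λ * T)) ≤ Λ * ((lam j T / Λ) * F j x + (1 - lam j T / Λ)) :=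
        mul_le_mul_of_nonneg_left (hxG.trans hsplit) hΛpos.le
      have e1 : Λ * (1 - 1 / (Λ * T)) = Λ - 1 / T := by
        field_simp
      have e2 : Λ * ((lam j T / Λ) * F j x + (1 - lam j T / Λ))
          = lam j T * F j x + Λ - lam j T := by
        field_simp
        ring
      rw [e1, e2] at h2
      linarith
    have hfin : 1 - F j x ≤ 1 / (lam j T * T) := by
      rw [le_div_iff₀ (by positivity)]
      have h4 : lam j T * (1 - F j x) * T ≤ 1 / T * T :=
        mul_le_mul_of_nonneg_right key hT.le
      have h5 : 1 / T * T = 1 := by field_simp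
      nlinarith
    linarith
  -- upper bound
  set M : ℝ := ⨆ j, qtl (F j) ((p:ℝ) * lam j T * T) with hMdef
  have hbdd : BddAbove (Set.range fun j => qtl (F j) ((p:ℝ) * lam j T * T)) :=
    (Set.finite_range _).bddAbove
  have htpos : ∀ j : Fin p, 0 < (p:ℝ) * lam j T * T := fun j => by
    have := hlam j T hT; positivity
  have hqnn : ∀ j, 0 ≤ qtl (F j) ((p:ℝ) * lam j T * T) := fun j =>
    le_csInf (hSjne j _ (htpos j)) fun x hx => hx.1.le
  have hMnn : 0 ≤ M := le_trans (hqnn (Classical.arbitrary _))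
    (le_ciSup hbdd (Classical.arbitrary _))
  have hup : qtl G (Λ * T) ≤ M := by
    apply le_of_forall_gt_imp_ge_of_dense
    intro x hx
    have hx0 : 0 < x := lt_of_le_of_lt hMnn hx
    apply csInf_le ⟨0, fun y hy => hy.1.le⟩
    refine ⟨hx0, ?_⟩
    have hFx : ∀ j, 1 - 1 / ((p:ℝ) * lam j T * T) ≤ F j x := by
      intro j
      have hlt : qtl (F j) ((p:ℝ) * lam j T * T) < x := lt_of_le_of_lt (le_ciSup hbdd j) hx
      obtain ⟨y, hy, hyx⟩ := exists_lt_of_csInf_lt (hSjne j _ (htpos j)) hlt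
      exact hy.2.trans (hmono j hyx.le)
    have hsum : ∑ j, (lam j T / Λ) * (1 - 1 / ((p:ℝ) * lam j T * T)) ≤ G x :=
      Finset.sum_le_sum fun j _ => mul_le_mul_of_nonneg_left (hFx j) (hcoef j)
    have heq : ∑ j, (lam j T / Λ) * (1 - 1 / ((p:ℝ) * lam j T * T)) = 1 - 1 / (Λ * T) := by
      have hterm : ∀ j : Fin p, (lam j T / Λ) * (1 - 1 / ((p:ℝ) * lam j T * T))
          = lam j T / Λ - 1 / (Λ * ((p:ℝ) * T)) := by
        intro j
        have hl := (hlam j T hT).ne'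
        have hpne : ((p:ℝ)) ≠ 0 := hp0.ne'
        field_simp
      rw [Finset.sum_congr rfl fun j _ => hterm j, Finset.sum_sub_distrib, hcoefsum,
        Finset.sum_const, Finset.card_univ, Fintype.card_fin, nsmul_eq_mul]
      have : (p:ℝ) * (1 / (Λ * ((p:ℝ) * T))) = 1 / (Λ * T) := by
        field_simp
      rw [this]
    rw [← heq]
    exact hsum
  exact ⟨hup, ciSup_le hlow⟩
end

section
/- Let p ≥ 1 and let F_1,…,F_p be probability distribution functions concentrating on (0,∞) with F_j(x) < 1 for all x > 0 and every j. For T > 0 let λ_1(T),…,λ_p(T) > 0, λ(T) = Σ_{j=1}^p λ_j(T), and F_{D,T} = Σ_{j=1}^p (λ_j(T)/λ(T)) F_j, with b_{D,T}(t) = inf{x > 0 : F_{D,T}(x) ≥ 1 − 1/t}. If λ_{j0}(T)·T → ∞ as T → ∞ for at least one index j0, then b_{D,T}(λ(T)·T) → ∞ as T → ∞. -/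
open MeasureTheory Filter Set
open scoped Topology

/-- If some `λ_{j0}(T)·T → ∞`, then the quantile of the mixture,
`b_{D,T}(λ(T)·T)`, tends to infinity as `T → ∞`. -/
theorem mixture_quantile_tendsto_atTop
    (p : ℕ) (hp : 1 ≤ p) (F : Fin p → ℝ → ℝ)
    (hmono : ∀ j, Monotone (F j))
    (hzero : ∀ j, F j 0 = 0)
    (hnonneg : ∀ j x, 0 ≤ F j x)
    (hle_one : ∀ j x, F j x ≤ 1)
    (htop : ∀ j, Tendsto (F j) atTop (𝓝 1))
    (hlt_one : ∀ j, ∀ x > (0 : ℝ), F j x < 1)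
    (lam : Fin p → ℝ → ℝ)
    (hlam : ∀ j, ∀ T > (0 : ℝ), 0 < lam j T)
    (j0 : Fin p) (hj0 : Tendsto (fun T => lam j0 T * T) atTop atTop) :
    Tendsto
      (fun T => qtl (fun x => ∑ j, (lam j T / ∑ k, lam k T) * F j x) ((∑ j, lam j T) * T))
      atTop atTop := by
  have hne : Nonempty (Fin p) := Fin.pos_iff_nonempty.mp hp
  rw [tendsto_atTop]
  intro M
  set M' := max M 1 with hM'def
  have hM'pos : (0:ℝ) < M' := lt_of_lt_of_le one_pos (le_max_right _ _)
  have hc : 0 < 1 - F j0 M' := by have := hlt_one j0 M' hM'pos; linarith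
  set c := 1 - F j0 M' with hcdef
  filter_upwards [hj0.eventually_gt_atTop (1 / c), eventually_ge_atTop (1:ℝ)]
    with T hT1 hT2
  have hT0 : (0:ℝ) < T := lt_of_lt_of_le one_pos hT2
  set L := ∑ k, lam k T with hL
  have hLpos : 0 < L := Finset.sum_pos (fun k _ => hlam k T hT0) Finset.univ_nonempty
  have hw : ∀ j, 0 < lam j T / L := fun j => div_pos (hlam j T hT0) hLpos
  have hwsum : ∑ j, lam j T / L = 1 := by
    rw [← Finset.sum_div, ← hL, div_self hLpos.ne']
  set t := L * T with ht
  have htpos : 0 < t := mul_pos hLpos hT0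
  set G : ℝ → ℝ := fun x => ∑ j, (lam j T / L) * F j x with hG
  -- the set is nonempty
  have hGtop : Tendsto G atTop (𝓝 1) := by
    have : Tendsto G atTop (𝓝 (∑ j, (lam j T / L) * 1)) := by
      apply tendsto_finset_sum
      intro j _
      exact (tendsto_const_nhds).mul (htop j)
    simpa [hwsum] using this
  have hlt : 1 - 1 / t < 1 := by
    have : 0 < 1 / t := by positivity
    linarith
  have hexists : ∃ x, 0 < x ∧ 1 - 1 / t ≤ G x := by
    have := (hGtop.eventually (eventually_gt_nhds hlt)).and (eventually_ge_atTop (1:ℝ))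
    obtain ⟨x, hx1, hx2⟩ := this.exists
    exact ⟨x, lt_of_lt_of_le one_pos hx2, hx1.le⟩
  -- lower bound
  have hlb : ∀ x ∈ {x : ℝ | 0 < x ∧ 1 - 1 / t ≤ G x}, M' ≤ x := by
    rintro x ⟨hx0, hxF⟩
    by_contra hxlt
    push_neg at hxlt
    have h1 : G x ≤ G M' := by
      apply Finset.sum_le_sum
      intro j _
      exact mul_le_mul_of_nonneg_left (hmono j hxlt.le) (hw j).le
    have h2 : G M' ≤ 1 - (lam j0 T / L) * c := by
      have key : (lam j0 T / L) * c ≤ ∑ j, (lam j T / L) * (1 - F j M') := by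
        apply Finset.single_le_sum (f := fun j => (lam j T / L) * (1 - F j M'))
          (fun j _ => by
            have := hle_one j M'
            have := (hw j).le
            nlinarith) (Finset.mem_univ j0)
      have expand : ∑ j, (lam j T / L) * (1 - F j M') = 1 - G M' := by
        simp only [mul_sub, mul_one, Finset.sum_sub_distrib, hwsum, hG]
      linarith [key, expand ▸ key]
    have h3 : 1 / t < (lam j0 T / L) * c := by
      rw [div_mul_eq_mul_div, ht, lt_div_iff₀ hLpos, div_mul_eq_mul_div,
        one_mul, div_lt_iff₀ (mul_pos hLpos hT0)]
      have : 1 / c * c < lam j0 T * T * c := by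
        exact mul_lt_mul_of_pos_right hT1 hc
      rw [div_mul_cancel₀ 1 hc.ne'] at this
      nlinarith
    have : G x < 1 - 1 / t := by linarith
    linarith
  calc M ≤ M' := le_max_left _ _
    _ ≤ qtl G t := le_csInf hexists hlb
end

section
/- Under the Streams setup and Condition (N), for every u > 0 one has lim_{T→∞} F̄_{D,T}(Tu)/F̄_{D,T}(T) = u^{−α_D}. (Note that F̄_{D,T} depends on T both through its argument and through the mixing weights λ_j(T)/λ(T).) -/
open MeasureTheory Filter Set
open scoped Topology

lemma exists_dyadic {T0 T : ℝ} (hT0 : 0 < T0) (hT : T0 ≤ T) :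
    ∃ n : ℕ, T0 * 2 ^ n ≤ T ∧ T ≤ T0 * 2 ^ (n + 1) := by
  have hT' : 0 < T := hT0.trans_le hT
  have h1 : (1:ℝ) ≤ T / T0 := (one_le_div hT0).mpr hT
  have hq : 0 < T / T0 := by positivity
  set x := Real.logb 2 (T / T0) with hx
  have hx0 : 0 ≤ x := Real.logb_nonneg one_lt_two h1
  have hfl : ((⌊x⌋.toNat : ℝ)) = (⌊x⌋ : ℝ) := by
    have := Int.toNat_of_nonneg (Int.floor_nonneg.mpr hx0); exact_mod_cast congrArg (fun z : ℤ => (z : ℝ)) this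
  refine ⟨⌊x⌋.toNat, ?_, ?_⟩
  · have h2 : (2:ℝ) ^ ((⌊x⌋.toNat : ℝ)) ≤ (2:ℝ) ^ x := by
      apply Real.rpow_le_rpow_of_exponent_le one_le_two
      rw [hfl]; exact Int.floor_le x
    rw [Real.rpow_logb two_pos (by norm_num) hq, Real.rpow_natCast] at h2
    calc T0 * 2 ^ ⌊x⌋.toNat ≤ T0 * (T / T0) := by
          exact mul_le_mul_of_nonneg_left h2 hT0.le
      _ = T := by field_simp
  · have h2 : (2:ℝ) ^ x ≤ (2:ℝ) ^ ((⌊x⌋.toNat + 1 : ℕ) : ℝ) := by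
      apply Real.rpow_le_rpow_of_exponent_le one_le_two
      push_cast
      rw [hfl]
      exact (Int.lt_floor_add_one x).le
    rw [Real.rpow_logb two_pos (by norm_num) hq, Real.rpow_natCast] at h2
    calc T = T0 * (T / T0) := by field_simp
      _ ≤ T0 * 2 ^ (⌊x⌋.toNat + 1) := mul_le_mul_of_nonneg_left h2 hT0.le

lemma ratio_tendsto_zero
    {Gj Gk : ℝ → ℝ} {aj ak : ℝ}
    (hGj_anti : Antitone Gj) (hGk_anti : Antitone Gk)
    (hGjpos : ∀ t > (0:ℝ), 0 < Gj t) (hGkpos : ∀ t > (0:ℝ), 0 < Gk t)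
    (hj : Tendsto (fun s => Gj (s * 2) / Gj s) atTop (𝓝 ((2:ℝ) ^ (-aj))))
    (hk : Tendsto (fun s => Gk (s * 2) / Gk s) atTop (𝓝 ((2:ℝ) ^ (-ak))))
    (hlt : ak < aj) :
    Tendsto (fun T => Gj T / Gk T) atTop (𝓝 0) := by
  have h2j : (0:ℝ) < (2:ℝ) ^ (-aj) := Real.rpow_pos_of_pos two_pos _
  have h2k : (0:ℝ) < (2:ℝ) ^ (-ak) := Real.rpow_pos_of_pos two_pos _
  have hjk : (2:ℝ) ^ (-aj) < (2:ℝ) ^ (-ak) :=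
    Real.rpow_lt_rpow_left_iff one_lt_two |>.mpr (by linarith)
  set ε : ℝ := ((2:ℝ) ^ (-ak) - (2:ℝ) ^ (-aj)) / 4 with hε
  have hεpos : 0 < ε := by simp only [hε]; linarith
  set a : ℝ := (2:ℝ) ^ (-aj) + ε with ha
  set b : ℝ := (2:ℝ) ^ (-ak) - ε with hb
  have hapos : 0 < a := by positivity
  have hbpos : 0 < b := by simp only [hb, hε]; linarith
  have hab : a < b := by simp only [ha, hb, hε]; linarith
  -- eventual bounds
  have hjev : ∀ᶠ s in atTop, Gj (s * 2) / Gj s < a := by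
    have := hj.eventually (eventually_lt_nhds (show (2:ℝ)^(-aj) < a by simp only [ha]; linarith))
    exact this
  have hkev : ∀ᶠ s in atTop, b < Gk (s * 2) / Gk s := by
    exact hk.eventually (eventually_gt_nhds (show b < (2:ℝ)^(-ak) by simp only [hb]; linarith))
  obtain ⟨T1, hT1⟩ := hjev.exists_forall_of_atTop
  obtain ⟨T2, hT2⟩ := hkev.exists_forall_of_atTop
  set T0 : ℝ := max 1 (max T1 T2) with hT0def
  have hT0pos : (0:ℝ) < T0 := lt_of_lt_of_le one_pos (le_max_left _ _)
  have hT0one : (1:ℝ) ≤ T0 := le_max_left _ _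
  have hjstep : ∀ s ≥ T0, Gj (s * 2) ≤ a * Gj s := by
    intro s hs
    have hspos : 0 < s := lt_of_lt_of_le hT0pos hs
    have := hT1 s (le_trans (le_trans (le_max_left T1 T2) (le_max_right 1 _)) hs)
    have hgs : 0 < Gj s := hGjpos s hspos
    calc Gj (s * 2) = (Gj (s * 2) / Gj s) * Gj s := by field_simp
      _ ≤ a * Gj s := mul_le_mul_of_nonneg_right this.le hgs.le
  have hkstep : ∀ s ≥ T0, b * Gk s ≤ Gk (s * 2) := by
    intro s hs
    have hspos : 0 < s := lt_of_lt_of_le hT0pos hs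
    have := hT2 s (le_trans (le_trans (le_max_right T1 T2) (le_max_right 1 _)) hs)
    have hgs : 0 < Gk s := hGkpos s hspos
    calc b * Gk s ≤ (Gk (s * 2) / Gk s) * Gk s := mul_le_mul_of_nonneg_right this.le hgs.le
      _ = Gk (s * 2) := by field_simp
  have hdy : ∀ n : ℕ, (1:ℝ) ≤ 2 ^ n := fun n => one_le_pow₀ one_le_two
  have hT0n : ∀ n : ℕ, T0 ≤ T0 * 2 ^ n := fun n => le_mul_of_one_le_right hT0pos.le (hdy n)
  have hjn : ∀ n : ℕ, Gj (T0 * 2 ^ n) ≤ a ^ n * Gj T0 := by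
    intro n; induction n with
    | zero => simp
    | succ n ih =>
      have : T0 * 2 ^ (n + 1) = (T0 * 2 ^ n) * 2 := by ring
      rw [this, pow_succ]
      calc Gj ((T0 * 2 ^ n) * 2) ≤ a * Gj (T0 * 2 ^ n) := hjstep _ (hT0n n)
        _ ≤ a * (a ^ n * Gj T0) := mul_le_mul_of_nonneg_left ih hapos.le
        _ = a ^ n * a * Gj T0 := by ring
  have hkn : ∀ n : ℕ, b ^ n * Gk T0 ≤ Gk (T0 * 2 ^ n) := by
    intro n; induction n with
    | zero => simp
    | succ n ih =>
      have h : T0 * 2 ^ (n + 1) = (T0 * 2 ^ n) * 2 := by ring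
      rw [h, pow_succ]
      calc b ^ n * b * Gk T0 = b * (b ^ n * Gk T0) := by ring
        _ ≤ b * Gk (T0 * 2 ^ n) := mul_le_mul_of_nonneg_left ih hbpos.le
        _ ≤ Gk ((T0 * 2 ^ n) * 2) := hkstep _ (hT0n n)
  -- metric proof
  rw [Metric.tendsto_atTop]
  intro ε' hε'
  set r : ℝ := a / b with hr
  have hr0 : 0 ≤ r := by positivity
  have hr1 : r < 1 := (div_lt_one hbpos).mpr hab
  set C : ℝ := Gj T0 / (b * Gk T0) with hC
  have hGkT0 : 0 < Gk T0 := hGkpos _ hT0pos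
  have hGjT0 : 0 < Gj T0 := hGjpos _ hT0pos
  have hCpos : 0 < C := by positivity
  have hlim : Tendsto (fun n : ℕ => C * r ^ n) atTop (𝓝 0) := by
    simpa using (tendsto_pow_atTop_nhds_zero_of_lt_one hr0 hr1).const_mul C
  obtain ⟨N, hN⟩ := (hlim.eventually (eventually_lt_nhds hε')).exists_forall_of_atTop
  refine ⟨T0 * 2 ^ (N + 1), fun T hT => ?_⟩
  have hTT0 : T0 ≤ T := le_trans (hT0n (N + 1)) hT
  have hTpos : 0 < T := lt_of_lt_of_le hT0pos hTT0
  obtain ⟨n, hn1, hn2⟩ := exists_dyadic hT0pos hTT0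
  have hnN : N ≤ n := by
    have : T0 * 2 ^ (N + 1) ≤ T0 * 2 ^ (n + 1) := le_trans hT hn2
    have h2 : (2:ℝ) ^ (N + 1) ≤ (2:ℝ) ^ (n + 1) := le_of_mul_le_mul_left this hT0pos
    have := (pow_le_pow_iff_right₀ one_lt_two).mp h2
    omega
  have hGkT : 0 < Gk T := hGkpos T hTpos
  have hGjT : 0 < Gj T := hGjpos T hTpos
  have hub : Gj T / Gk T ≤ C * r ^ n := by
    have h1 : Gj T ≤ a ^ n * Gj T0 := le_trans (hGj_anti hn1) (hjn n)
    have h2 : b ^ (n + 1) * Gk T0 ≤ Gk T := le_trans (hkn (n + 1)) (hGk_anti hn2)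
    have hbn : 0 < b ^ (n + 1) * Gk T0 := by positivity
    calc Gj T / Gk T ≤ (a ^ n * Gj T0) / (b ^ (n + 1) * Gk T0) :=
          div_le_div₀ (by positivity) h1 hbn h2
      _ = C * r ^ n := by
          rw [hC, hr, div_pow, pow_succ]
          field_simp
  have hrn : C * r ^ n ≤ C * r ^ N :=
    mul_le_mul_of_nonneg_left (pow_le_pow_of_le_one hr0 hr1.le hnN) hCpos.le
  rw [Real.dist_eq, sub_zero, abs_of_nonneg (by positivity)]
  exact lt_of_le_of_lt (le_trans hub hrn) (hN N le_rfl)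

/-- Under the streams setup and Condition (N), the mixture tail behaves like a
regularly varying function: `F̄_{D,T}(Tu)/F̄_{D,T}(T) → u^{−α_D}` for every `u > 0`. -/
theorem mixture_tail_regular_variation
    (p : ℕ) (hp : 1 ≤ p) (F : Fin p → ℝ → ℝ) (α : Fin p → ℝ)
    (hα : ∀ j, 1 < α j ∧ α j < 2)
    (hmono : ∀ j, Monotone (F j))
    (hzero : ∀ j, F j 0 = 0)
    (hnonneg : ∀ j x, 0 ≤ F j x)
    (hle_one : ∀ j x, F j x ≤ 1)
    (htop : ∀ j, Tendsto (F j) atTop (𝓝 1))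
    (htailpos : ∀ j, ∀ x > (0 : ℝ), F j x < 1)
    (hRV : ∀ j, ∀ x > (0 : ℝ),
      Tendsto (fun s : ℝ => (1 - F j (s * x)) / (1 - F j s)) atTop (𝓝 (x ^ (-(α j)))))
    (lam : Fin p → ℝ → ℝ)
    (hlam : ∀ j, ∀ T > (0 : ℝ), 0 < lam j T)
    -- Condition (N): liminf over T of max over {j : α_j = α_D} of λ_j(T)/λ(T) is positive
    (hN : 0 < Filter.liminf
      (fun T : ℝ => ⨆ j : {j : Fin p // α j = ⨅ k, α k}, lam j.1 T / ∑ k, lam k T) atTop) :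
    ∀ u > (0 : ℝ),
      Tendsto
        (fun T : ℝ =>
          (1 - ∑ j, (lam j T / ∑ k, lam k T) * F j (T * u)) /
          (1 - ∑ j, (lam j T / ∑ k, lam k T) * F j T))
        atTop (𝓝 (u ^ (-(⨅ k, α k)))) := by
  intro u hu
  haveI : Nonempty (Fin p) := ⟨⟨0, by omega⟩⟩
  classical
  set αD := ⨅ k, α k with hαD
  set l : ℝ := u ^ (-αD) with hl
  have hlpos : 0 < l := Real.rpow_pos_of_pos hu _
  set G : Fin p → ℝ → ℝ := fun j t => 1 - F j t with hGdef
  have hGpos : ∀ j, ∀ t > (0:ℝ), 0 < G j t := fun j t ht => sub_pos.mpr (htailpos j t ht)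
  have hGnonneg : ∀ j t, 0 ≤ G j t := fun j t => sub_nonneg.mpr (hle_one j t)
  have hGanti : ∀ j, Antitone (G j) := fun j x y hxy => sub_le_sub_left (hmono j hxy) 1
  have hRV' : ∀ j, ∀ x > (0:ℝ),
      Tendsto (fun s : ℝ => G j (s * x) / G j s) atTop (𝓝 (x ^ (-(α j)))) := by
    intro j x hx; simpa only [hGdef] using hRV j x hx
  have hαD_le : ∀ j, αD ≤ α j := fun j => ciInf_le (Finite.bddBelow_range α) j
  obtain ⟨j0, hj0⟩ := exists_eq_ciInf_of_finite (f := α)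
  haveI hD'ne : Nonempty {j : Fin p // α j = αD} := ⟨⟨j0, hj0⟩⟩
  set c' : ℝ := min u 1 with hc'
  have hc'pos : 0 < c' := lt_min hu one_pos
  set D : Finset (Fin p) := Finset.univ.filter (fun j => α j = αD) with hDdef
  set Dc : Finset (Fin p) := Finset.univ.filter (fun j => ¬ α j = αD) with hDcdef
  set L := Filter.liminf
      (fun T : ℝ => ⨆ j : {j : Fin p // α j = αD}, lam j.1 T / ∑ k, lam k T) atTop with hLdef
  -- eventually the sup weight exceeds L/2
  have hwle : ∀ᶠ T : ℝ in atTop,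
      (⨆ j : {j : Fin p // α j = αD}, lam j.1 T / ∑ k, lam k T) ≤ 1 := by
    filter_upwards [eventually_gt_atTop 0] with T hT
    have hS : 0 < ∑ k, lam k T := Finset.sum_pos (fun k _ => hlam k T hT) Finset.univ_nonempty
    exact ciSup_le fun j => (div_le_one hS).mpr
      (Finset.single_le_sum (fun k _ => (hlam k T hT).le) (Finset.mem_univ j.1))
  have hbdd : Filter.IsBoundedUnder (· ≥ ·) atTop
      (fun T : ℝ => ⨆ j : {j : Fin p // α j = αD}, lam j.1 T / ∑ k, lam k T) := by
    apply Filter.isBoundedUnder_of_eventually_ge (a := 0)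
    filter_upwards [eventually_gt_atTop 0] with T hT
    have hS : 0 < ∑ k, lam k T := Finset.sum_pos (fun k _ => hlam k T hT) Finset.univ_nonempty
    exact le_trans (div_nonneg (hlam j0 T hT).le hS.le)
      (le_ciSup (f := fun j : {j : Fin p // α j = αD} => lam j.1 T / ∑ k, lam k T)
        (Finite.bddAbove_range _) ⟨j0, hj0⟩)
  have hev : ∀ᶠ T : ℝ in atTop,
      L / 2 < ⨆ j : {j : Fin p // α j = αD}, lam j.1 T / ∑ k, lam k T :=
    Filter.eventually_lt_of_lt_liminf (by linarith [half_lt_self hN]) hbdd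
  -- the bounding function
  set B : ℝ → ℝ := fun T => (∑ j ∈ D, |G j (T * u) / G j T - l|) +
      ((1 + l) * (2 / L)) * ∑ j ∈ Dc, ∑ k ∈ D, G j (T * c') / G k T with hBdef
  have hBtendsto : Tendsto B atTop (𝓝 0) := by
    have h1 : Tendsto (fun T => ∑ j ∈ D, |G j (T * u) / G j T - l|) atTop (𝓝 0) := by
      have : Tendsto (fun T => ∑ j ∈ D, |G j (T * u) / G j T - l|) atTop
          (𝓝 (∑ j ∈ D, 0)) := by
        apply tendsto_finset_sum
        intro j hj
        have hjD : α j = αD := by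
          simpa only [hDdef, Finset.mem_filter, Finset.mem_univ, true_and] using hj
        have h := hRV' j u hu
        rw [hjD] at h
        have h' := h.sub_const l
        rw [show u ^ (-αD) - l = 0 by rw [hl, sub_self]] at h'
        simpa using h'.abs
      simpa using this
    have h2 : Tendsto (fun T => ∑ j ∈ Dc, ∑ k ∈ D, G j (T * c') / G k T) atTop (𝓝 0) := by
      have : Tendsto (fun T => ∑ j ∈ Dc, ∑ k ∈ D, G j (T * c') / G k T) atTop
          (𝓝 (∑ j ∈ Dc, ∑ k ∈ D, 0)) := by
        apply tendsto_finset_sum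
        intro j hj
        apply tendsto_finset_sum
        intro k hk
        have hjD : ¬ α j = αD := by
          simpa only [hDcdef, Finset.mem_filter, Finset.mem_univ, true_and] using hj
        have hkD : α k = αD := by
          simpa only [hDdef, Finset.mem_filter, Finset.mem_univ, true_and] using hk
        have hlt : α k < α j := by
          rw [hkD]; exact lt_of_le_of_ne (hαD_le j) (Ne.symm hjD)
        have hjk := ratio_tendsto_zero (hGanti j) (hGanti k) (hGpos j) (hGpos k)
          (hRV' j 2 two_pos) (hRV' k 2 two_pos) hlt
        have hone := hRV' j c' hc'pos
        have hmul : Tendsto (fun T => (G j (T * c') / G j T) * (G j T / G k T)) atTop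
            (𝓝 (c' ^ (-(α j)) * 0)) := hone.mul hjk
        rw [mul_zero] at hmul
        apply Tendsto.congr' ?_ hmul
        filter_upwards [eventually_gt_atTop 0] with T hT
        have hGjT : G j T ≠ 0 := (hGpos j T hT).ne'
        field_simp
      simpa using this
    have := h1.add (h2.const_mul ((1 + l) * (2 / L)))
    simpa using this
  -- key pointwise bound
  have key : ∀ T : ℝ, 0 < T →
      (L / 2 < ⨆ j : {j : Fin p // α j = αD}, lam j.1 T / ∑ k, lam k T) →
      |(1 - ∑ j, (lam j T / ∑ k, lam k T) * F j (T * u)) /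
        (1 - ∑ j, (lam j T / ∑ k, lam k T) * F j T) - l| ≤ B T := by
    intro T hT hsup
    set S : ℝ := ∑ k, lam k T with hSdef
    have hS : 0 < S := Finset.sum_pos (fun k _ => hlam k T hT) Finset.univ_nonempty
    set w : Fin p → ℝ := fun j => lam j T / S with hwdef
    have hwpos : ∀ j, 0 < w j := fun j => div_pos (hlam j T hT) hS
    have hwsum : ∑ j, w j = 1 := by
      rw [hwdef]; rw [← Finset.sum_div]; exact div_self hS.ne'
    have hwle1 : ∀ j, w j ≤ 1 := fun j =>
      hwsum ▸ Finset.single_le_sum (fun k _ => (hwpos k).le) (Finset.mem_univ j)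
    have hnum : ∀ x : ℝ, 1 - ∑ j, w j * F j x = ∑ j, w j * G j x := by
      intro x
      simp only [hGdef, mul_sub, mul_one, Finset.sum_sub_distrib, hwsum]
    rw [hnum, hnum]
    set Den : ℝ := ∑ j, w j * G j T with hDen
    have hDenpos : 0 < Den :=
      Finset.sum_pos (fun j _ => mul_pos (hwpos j) (hGpos j T hT)) Finset.univ_nonempty
    obtain ⟨k₀, hk₀⟩ := exists_eq_ciSup_of_finite
      (f := fun j : {j : Fin p // α j = αD} => lam j.1 T / S)
    have hk₀w : L / 2 < w k₀.1 := by simp only [hwdef]; rw [hk₀]; exact hsup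
    have hk₀D : k₀.1 ∈ D := by
      simp only [hDdef, Finset.mem_filter, Finset.mem_univ, true_and]; exact k₀.2
    have hGk₀ : 0 < G k₀.1 T := hGpos _ T hT
    have hDenlb : L / 2 * G k₀.1 T ≤ Den := by
      calc L / 2 * G k₀.1 T ≤ w k₀.1 * G k₀.1 T :=
            mul_le_mul_of_nonneg_right hk₀w.le (hGnonneg _ _)
        _ ≤ Den := Finset.single_le_sum
            (fun j _ => mul_nonneg (hwpos j).le (hGnonneg j T)) (Finset.mem_univ k₀.1)
    have hLGpos : 0 < L / 2 * G k₀.1 T := by positivity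
    have hDiff : (∑ j, w j * G j (T * u)) / Den - l =
        (∑ j, w j * (G j (T * u) - l * G j T)) / Den := by
      have heq : ∑ j, w j * (G j (T * u) - l * G j T) =
          (∑ j, w j * G j (T * u)) - l * Den := by
        rw [hDen, Finset.mul_sum, ← Finset.sum_sub_distrib]
        congr 1; ext j; ring
      rw [heq, sub_div, mul_div_assoc, div_self hDenpos.ne', mul_one]
    rw [hDiff, abs_div, abs_of_pos hDenpos]
    have habs : |∑ j, w j * (G j (T * u) - l * G j T)| ≤
        ∑ j, w j * |G j (T * u) - l * G j T| := by
      refine le_trans (Finset.abs_sum_le_sum_abs _ _) ?_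
      apply Finset.sum_le_sum
      intro j _
      rw [abs_mul, abs_of_pos (hwpos j)]
    refine le_trans ((div_le_div_iff_of_pos_right hDenpos).mpr habs) ?_
    have hsplit : ∑ j, w j * |G j (T * u) - l * G j T| =
        (∑ j ∈ D, w j * |G j (T * u) - l * G j T|) +
        (∑ j ∈ Dc, w j * |G j (T * u) - l * G j T|) := by
      rw [hDdef, hDcdef, Finset.sum_filter_add_sum_filter_not]
    rw [hsplit, add_div]
    simp only [hBdef]
    apply add_le_add
    · -- D part
      rw [Finset.sum_div]
      apply Finset.sum_le_sum
      intro j _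
      have hGT := hGpos j T hT
      have hGTne : G j T ≠ 0 := hGT.ne'
      have hfact : |G j (T * u) - l * G j T| = G j T * |G j (T * u) / G j T - l| := by
        have heq : G j (T * u) - l * G j T = G j T * (G j (T * u) / G j T - l) := by
          field_simp
        rw [heq, abs_mul, abs_of_pos hGT]
      rw [hfact]
      have hwG : w j * G j T ≤ Den :=
        Finset.single_le_sum (fun k _ => mul_nonneg (hwpos k).le (hGnonneg k T))
          (Finset.mem_univ j)
      calc w j * (G j T * |G j (T * u) / G j T - l|) / Den
          = (w j * G j T / Den) * |G j (T * u) / G j T - l| := by ring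
        _ ≤ 1 * |G j (T * u) / G j T - l| :=
            mul_le_mul_of_nonneg_right ((div_le_one hDenpos).mpr hwG) (abs_nonneg _)
        _ = |G j (T * u) / G j T - l| := one_mul _
    · -- Dc part
      rw [Finset.sum_div, Finset.mul_sum]
      apply Finset.sum_le_sum
      intro j _
      have hGc' : 0 < G j (T * c') := hGpos j _ (by positivity)
      have h1 : G j (T * u) ≤ G j (T * c') :=
        hGanti j (mul_le_mul_of_nonneg_left (min_le_left u 1) hT.le)
      have h2 : G j T ≤ G j (T * c') := by
        apply hGanti j
        calc T * c' ≤ T * 1 := mul_le_mul_of_nonneg_left (min_le_right u 1) hT.le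
          _ = T := mul_one T
      have hX : |G j (T * u) - l * G j T| ≤ (1 + l) * G j (T * c') := by
        have h3 := abs_sub (G j (T * u)) (l * G j T)
        rw [abs_of_nonneg (hGnonneg j _),
          abs_of_nonneg (mul_nonneg hlpos.le (hGnonneg j T))] at h3
        nlinarith [hGnonneg j T, hGnonneg j (T * u)]
      have hLne : L ≠ 0 := hN.ne'
      have hGk₀ne : G k₀.1 T ≠ 0 := hGk₀.ne'
      calc w j * |G j (T * u) - l * G j T| / Den
          ≤ 1 * ((1 + l) * G j (T * c')) / (L / 2 * G k₀.1 T) :=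
            div_le_div₀ (by positivity)
              (mul_le_mul (hwle1 j) hX (abs_nonneg _) one_pos.le) hLGpos hDenlb
        _ = (1 + l) * (2 / L) * (G j (T * c') / G k₀.1 T) := by
            field_simp
        _ ≤ (1 + l) * (2 / L) * ∑ k ∈ D, G j (T * c') / G k T := by
            apply mul_le_mul_of_nonneg_left ?_ (by positivity)
            exact Finset.single_le_sum
              (fun k _ => div_nonneg (hGnonneg j _) (hGnonneg k T)) hk₀D
  -- assemble
  have hbound : ∀ᶠ T : ℝ in atTop,
      |(1 - ∑ j, (lam j T / ∑ k, lam k T) * F j (T * u)) /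
        (1 - ∑ j, (lam j T / ∑ k, lam k T) * F j T) - l| ≤ B T := by
    filter_upwards [hev, eventually_gt_atTop 0] with T hsup hT
    exact key T hT hsup
  have habs : Tendsto (fun T : ℝ =>
      |(1 - ∑ j, (lam j T / ∑ k, lam k T) * F j (T * u)) /
        (1 - ∑ j, (lam j T / ∑ k, lam k T) * F j T) - l|) atTop (𝓝 0) :=
    squeeze_zero' (Eventually.of_forall fun T => abs_nonneg _) hbound hBtendsto
  rw [tendsto_iff_dist_tendsto_zero]
  simpa [Real.dist_eq] using habs
end

section
/- Under the Streams setup and Condition (N), assume in addition that λ_{j0}(T)·T → ∞ as T → ∞ for at least one index j0. Then for every u > 0, lim_{T→∞} λ(T)·T·F̄_{D,T}( b_{D,T}(λ(T)·T)·u ) = u^{−α_D}, where b_{D,T}(t) = inf{x > 0 : F_{D,T}(x) ≥ 1 − 1/t}. In particular (taking u = 1), λ(T)·T·F̄_{D,T}(b_{D,T}(λ(T)·T)) → 1. -/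
open MeasureTheory Filter Set
open scoped Topology

/-! The tail of the mixture is a convex combination of regularly varying tails. A component of
index `α j > α_D` is negligible against one of index `α_D` (along the doubling sequence `2 ^ n`
their ratio is summable by the ratio test, and monotonicity interpolates), while Condition (N)
keeps the weight of some heaviest component bounded below; hence
`F̄_{D,T}(b x) / F̄_{D,T}(b) → x ^ (-α_D)` along any `b → ∞`. The quantile `b_T = b_{D,T}(λ(T) T)`
does tend to infinity, and its defining property sandwiches `λ(T) T F̄_{D,T}(b_T u)` between
`F̄_{D,T}(b_T u) / F̄_{D,T}(b_T v)` and `F̄_{D,T}(b_T u) / F̄_{D,T}(b_T w)` for `v < 1 < w`; letting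
`v, w → 1` gives `u ^ (-α_D)`. -/

lemma tendsto_div_of_tendsto_div_two_pow {f g : ℝ → ℝ} (hf0 : ∀ s > 0, 0 ≤ f s)
    (hg0 : ∀ s > 0, 0 < g s) (hfa : Antitone f) (hga : Antitone g)
    (h : Tendsto (fun n : ℕ => f (2 ^ n) / g (2 ^ (n + 1))) atTop (𝓝 0)) :
    Tendsto (fun s => f s / g s) atTop (𝓝 0) := by
  have hlog : Tendsto (fun s : ℝ => Nat.log 2 ⌊s⌋₊) atTop atTop :=
    tendsto_atTop_atTop.2 fun N => ⟨2 ^ N, fun s hs =>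
      Nat.le_log_of_pow_le one_lt_two (Nat.le_floor (by exact_mod_cast hs))⟩
  refine squeeze_zero' ?_ ?_ (h.comp hlog)
  · filter_upwards [eventually_gt_atTop 0] with s hs
    exact div_nonneg (hf0 s hs) (hg0 s hs).le
  filter_upwards [eventually_ge_atTop 1] with s hs
  have hN : ⌊s⌋₊ ≠ 0 := (Nat.floor_pos.2 hs).ne'
  have hlo : (2 : ℝ) ^ Nat.log 2 ⌊s⌋₊ ≤ s :=
    le_trans (by exact_mod_cast Nat.pow_log_le_self 2 hN) (Nat.floor_le (by linarith))
  have hhi : s ≤ (2 : ℝ) ^ (Nat.log 2 ⌊s⌋₊ + 1) :=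
    le_trans (Nat.lt_floor_add_one s).le
      (by exact_mod_cast Nat.lt_pow_succ_log_self one_lt_two ⌊s⌋₊)
  exact div_le_div₀ (hf0 _ (by positivity)) (hfa hlo) (hg0 _ (by positivity)) (hga hhi)

lemma tendsto_div_two_pow_of_index_lt {f g : ℝ → ℝ} {a c : ℝ} (hac : c < a)
    (hf0 : ∀ s > 0, 0 < f s) (hg0 : ∀ s > 0, 0 < g s)
    (hf : Tendsto (fun s => f (s * 2) / f s) atTop (𝓝 (2 ^ (-a))))
    (hg : Tendsto (fun s => g (s * 2) / g s) atTop (𝓝 (2 ^ (-c)))) :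
    Tendsto (fun n : ℕ => f (2 ^ n) / g (2 ^ (n + 1))) atTop (𝓝 0) := by
  have hpow := tendsto_pow_atTop_atTop_of_one_lt (one_lt_two (α := ℝ))
  have hfn : Tendsto (fun n : ℕ => f (2 ^ (n + 1)) / f (2 ^ n)) atTop (𝓝 (2 ^ (-a))) := by
    simpa only [Function.comp_def, pow_succ] using hf.comp hpow
  have hgn : Tendsto (fun n : ℕ => g (2 ^ (n + 1)) / g (2 ^ n)) atTop (𝓝 (2 ^ (-c))) := by
    simpa only [Function.comp_def, pow_succ] using hg.comp hpow
  have hc : (0 : ℝ) < 2 ^ (-c) := by positivity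
  have hdiag : Tendsto (fun n : ℕ => f (2 ^ n) / g (2 ^ n)) atTop (𝓝 0) := by
    refine (summable_of_ratio_test_tendsto_lt_one (l := 2 ^ (-a) / 2 ^ (-c)) ?_
      (Eventually.of_forall fun n => (div_pos (hf0 _ (by positivity))
        (hg0 _ (by positivity))).ne') ?_).tendsto_atTop_zero
    · rw [div_lt_one hc]
      exact Real.rpow_lt_rpow_of_exponent_lt one_lt_two (by linarith)
    · refine (hfn.div hgn hc.ne').congr fun n => ?_
      have := hf0 (2 ^ n) (by positivity)
      have := hf0 (2 ^ (n + 1)) (by positivity)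
      have := hg0 (2 ^ n) (by positivity)
      have := hg0 (2 ^ (n + 1)) (by positivity)
      rw [Pi.div_apply, Real.norm_of_nonneg (by positivity), Real.norm_of_nonneg (by positivity)]
      field_simp
  simpa using (hdiag.mul (hgn.inv₀ hc.ne')).congr fun n => by
    have := hg0 (2 ^ n) (by positivity)
    field_simp

lemma tendsto_div_of_index_lt {f g : ℝ → ℝ} {a c : ℝ} (hac : c < a)
    (hf0 : ∀ s > 0, 0 < f s) (hg0 : ∀ s > 0, 0 < g s) (hfa : Antitone f) (hga : Antitone g)
    (hf : Tendsto (fun s => f (s * 2) / f s) atTop (𝓝 (2 ^ (-a))))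
    (hg : Tendsto (fun s => g (s * 2) / g s) atTop (𝓝 (2 ^ (-c)))) :
    Tendsto (fun s => f s / g s) atTop (𝓝 0) :=
  tendsto_div_of_tendsto_div_two_pow (fun s hs => (hf0 s hs).le) hg0 hfa hga
    (tendsto_div_two_pow_of_index_lt hac hf0 hg0 hf hg)

section MixtureTail

variable {ι β : Type*} [Fintype ι] {l : Filter β} {Fbar : ι → ℝ → ℝ} {α : ι → ℝ} {αD : ℝ}
  {w : β → ι → ℝ} {b : β → ℝ}

lemma tendsto_tail_share_zero (hpos : ∀ j, ∀ x > 0, 0 < Fbar j x) (hanti : ∀ j, Antitone (Fbar j))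
    (hdouble : ∀ j, Tendsto (fun s => Fbar j (s * 2) / Fbar j s) atTop (𝓝 (2 ^ (-α j))))
    (hw : ∀ᶠ T in l, (∀ j, 0 ≤ w T j) ∧ ∑ j, w T j = 1)
    (hdom : ∃ c > 0, ∀ᶠ T in l, ∃ k, α k = αD ∧ c ≤ w T k) (hb : Tendsto b l atTop)
    {j : ι} (hj : αD < α j) :
    Tendsto (fun T => w T j * Fbar j (b T) / ∑ k, w T k * Fbar k (b T)) l (𝓝 0) := by
  obtain ⟨c, hc, hcw⟩ := hdom
  set D := Finset.univ.filter fun k => α k = αD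
  have hcross : Tendsto (fun T => c⁻¹ * ∑ k ∈ D, Fbar j (b T) / Fbar k (b T)) l (𝓝 0) := by
    simpa using (tendsto_finsetSum D fun k hk => (tendsto_div_of_index_lt
      ((Finset.mem_filter.1 hk).2.trans_lt hj) (hpos j) (hpos k) (hanti j) (hanti k)
      (hdouble j) (hdouble k)).comp hb).const_mul c⁻¹
  have hterm : ∀ᶠ T in l, ∀ i, 0 ≤ w T i * Fbar i (b T) := by
    filter_upwards [hw, hb.eventually_gt_atTop 0] with T hwT hbT i
    exact mul_nonneg (hwT.1 i) (hpos i _ hbT).le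
  refine squeeze_zero' ?_ ?_ hcross
  · filter_upwards [hterm] with T hT
    exact div_nonneg (hT j) (Finset.sum_nonneg fun i _ => hT i)
  filter_upwards [hw, hcw, hb.eventually_gt_atTop 0, hterm]
    with T ⟨hw0, hw1⟩ ⟨k, hk, hck⟩ hbT hterm
  have hwj : w T j ≤ 1 := hw1 ▸ Finset.single_le_sum (fun i _ => hw0 i) (Finset.mem_univ j)
  have hk0 := hpos k _ hbT
  have hj0 := hpos j _ hbT
  calc w T j * Fbar j (b T) / ∑ i, w T i * Fbar i (b T)
      ≤ Fbar j (b T) / (c * Fbar k (b T)) := by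
        gcongr ?_ / ?_
        · exact mul_le_of_le_one_left hj0.le hwj
        · exact (mul_le_mul_of_nonneg_right hck hk0.le).trans
            (Finset.single_le_sum (fun i _ => hterm i) (Finset.mem_univ k))
    _ = c⁻¹ * (Fbar j (b T) / Fbar k (b T)) := by field_simp
    _ ≤ c⁻¹ * ∑ i ∈ D, Fbar j (b T) / Fbar i (b T) := by
        gcongr
        exact Finset.single_le_sum (fun i _ => div_nonneg hj0.le (hpos i _ hbT).le)
          (Finset.mem_filter.2 ⟨Finset.mem_univ k, hk⟩)

lemma tendsto_mixture_tail_ratio (hpos : ∀ j, ∀ x > 0, 0 < Fbar j x)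
    (hanti : ∀ j, Antitone (Fbar j))
    (hRV : ∀ j, ∀ x > 0, Tendsto (fun s => Fbar j (s * x) / Fbar j s) atTop (𝓝 (x ^ (-α j))))
    (hαD : ∀ j, αD ≤ α j) (hw : ∀ᶠ T in l, (∀ j, 0 ≤ w T j) ∧ ∑ j, w T j = 1)
    (hdom : ∃ c > 0, ∀ᶠ T in l, ∃ k, α k = αD ∧ c ≤ w T k) (hb : Tendsto b l atTop)
    {x : ℝ} (hx : 0 < x) :
    Tendsto (fun T => (∑ j, w T j * Fbar j (b T * x)) / ∑ j, w T j * Fbar j (b T)) l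
      (𝓝 (x ^ (-αD))) := by
  set B := fun T => ∑ j, w T j * Fbar j (b T)
  set ρ := fun j T => w T j * Fbar j (b T) / B T
  set r := fun j T => Fbar j (b T * x) / Fbar j (b T)
  have hr : ∀ j, Tendsto (r j) l (𝓝 (x ^ (-α j))) := fun j => (hRV j x hx).comp hb
  have hterm : ∀ j, Tendsto (fun T => (r j T - x ^ (-αD)) * ρ j T) l (𝓝 0) := by
    intro j
    rcases (hαD j).eq_or_lt with hj | hj
    · have hrj : Tendsto (fun T => r j T - x ^ (-αD)) l (𝓝 0) := by
        simpa [← hj] using (hr j).sub_const (x ^ (-αD))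
      refine hrj.zero_mul_isBoundedUnder_le (isBoundedUnder_of_eventually_le (a := 1) ?_)
      filter_upwards [hw, hb.eventually_gt_atTop 0] with T hwT hbT
      have hnonneg : ∀ i, 0 ≤ w T i * Fbar i (b T) := fun i =>
        mul_nonneg (hwT.1 i) (hpos i _ hbT).le
      have hB := Finset.sum_nonneg fun i (_ : i ∈ Finset.univ) => hnonneg i
      rw [Function.comp_apply, Real.norm_of_nonneg (div_nonneg (hnonneg j) hB)]
      exact div_le_one_of_le₀ (Finset.single_le_sum (fun i _ => hnonneg i) (Finset.mem_univ j)) hB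
    · simpa using ((hr j).sub_const _).mul
        (tendsto_tail_share_zero hpos hanti (fun j => hRV j 2 two_pos) hw hdom hb hj)
  have hsum := tendsto_finsetSum Finset.univ fun j _ => hterm j
  rw [Finset.sum_const_zero] at hsum
  refine tendsto_sub_nhds_zero_iff.1 <| hsum.congr' ?_
  obtain ⟨c, hc, hcw⟩ := hdom
  filter_upwards [hw, hcw, hb.eventually_gt_atTop 0] with T ⟨hw0, _⟩ ⟨k, _, hck⟩ hbT
  have hB : 0 < B T := (mul_pos (hc.trans_le hck) (hpos k _ hbT)).trans_le
    (Finset.single_le_sum (fun i _ => mul_nonneg (hw0 i) (hpos i _ hbT).le) (Finset.mem_univ k))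
  have hρ : ∑ j, ρ j T = 1 := by simp only [ρ, ← Finset.sum_div]; exact div_self hB.ne'
  simp only [sub_mul, Finset.sum_sub_distrib, ← Finset.mul_sum, hρ, mul_one]
  congr 1
  rw [Finset.sum_div]
  refine Finset.sum_congr rfl fun j _ => ?_
  have := (hpos j _ hbT).ne'
  simp only [r, ρ, B]
  field_simp

end MixtureTail

section Quantile

variable {G : ℝ → ℝ} {t x : ℝ}

lemma one_div_lt_one_sub_of_lt_qtl (hx : 0 < x) (hxb : x < qtl G t) : 1 / t < 1 - G x := by
  by_contra! h
  exact hxb.not_ge (csInf_le ⟨0, fun y hy => hy.1.le⟩ ⟨hx, by linarith⟩)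

lemma one_sub_le_one_div_of_qtl_lt (hG : Monotone G) (hG1 : Tendsto G atTop (𝓝 1))
    (ht : 0 < t) (hxb : qtl G t < x) : 1 - G x ≤ 1 / t := by
  have hne : {x : ℝ | 0 < x ∧ 1 - 1 / t ≤ G x}.Nonempty := by
    obtain ⟨y, hy, hy0⟩ := ((hG1.eventually_const_lt (show 1 - 1 / t < 1 by simpa using ht)).and
      (eventually_gt_atTop 0)).exists
    exact ⟨y, hy0, hy.le⟩
  obtain ⟨y, hy, hyx⟩ := exists_lt_of_csInf_lt hne hxb
  linarith [hy.2, hG hyx.le]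

lemma tendsto_qtl_atTop {β : Type*} {l : Filter β} {G : β → ℝ → ℝ} {t : β → ℝ}
    (ht : Tendsto t l atTop) (hG : ∀ᶠ T in l, Monotone (G T) ∧ Tendsto (G T) atTop (𝓝 1))
    (htail : ∀ M > 0, ∃ m > 0, ∀ᶠ T in l, m ≤ 1 - G T M) :
    Tendsto (fun T => qtl (G T) (t T)) l atTop := by
  refine tendsto_atTop.2 fun M => ?_
  obtain ⟨m, hm, hmT⟩ := htail (max M 1) (by positivity)
  filter_upwards [hG, hmT, ht.eventually_gt_atTop (1 / m), ht.eventually_gt_atTop 0]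
    with T ⟨hmono, hlim⟩ hmM htm ht0
  have hsmall : 1 / t T < m := by rwa [div_lt_iff₀ ht0, mul_comm, ← div_lt_iff₀ hm]
  by_contra! hlt
  linarith [one_sub_le_one_div_of_qtl_lt hmono hlim ht0 (hlt.trans_le (le_max_left M 1))]

end Quantile

lemma tendsto_mul_of_tendsto_ratio {β : Type*} {l : Filter β} {h : β → ℝ → ℝ} {t : β → ℝ}
    {a u : ℝ} (hpos : ∀ y > 0, ∀ᶠ T in l, 0 < h T y)
    (hR : ∀ y > 0, Tendsto (fun T => h T y / h T 1) l (𝓝 (y ^ (-a))))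
    (hbelow : ∀ y ∈ Ioo 0 1, ∀ᶠ T in l, 1 ≤ t T * h T y)
    (habove : ∀ y > 1, ∀ᶠ T in l, t T * h T y ≤ 1) (hu : 0 < u) :
    Tendsto (fun T => t T * h T u) l (𝓝 (u ^ (-a))) := by
  have hquot : ∀ y > 0, Tendsto (fun T => h T u / h T y) l (𝓝 (u ^ (-a) / y ^ (-a))) :=
    fun y hy => ((hR u hu).div (hR y hy) (by positivity)).congr' <| by
      filter_upwards [hpos 1 one_pos] with T hT using div_div_div_cancel_right₀ hT.ne' _ _
  have hφ : Tendsto (fun y : ℝ => u ^ (-a) / y ^ (-a)) (𝓝 1) (𝓝 (u ^ (-a))) := by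
    have : ContinuousAt (fun y : ℝ => u ^ (-a) / y ^ (-a)) 1 :=
      continuousAt_const.div (Real.continuousAt_rpow_const 1 (-a) (Or.inl one_ne_zero)) (by simp)
    simpa using this.tendsto
  refine tendsto_order.2 ⟨fun m hm => ?_, fun M hM => ?_⟩
  · obtain ⟨v, hmv, hv⟩ := (((hφ.mono_left nhdsWithin_le_nhds).eventually
      (lt_mem_nhds hm)).and (Ioo_mem_nhdsLT one_pos)).exists
    filter_upwards [(hquot v hv.1).eventually (lt_mem_nhds hmv), hbelow v hv, hpos u hu,
      hpos v hv.1] with T hm' hv1 hu0 hv0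
    calc m < h T u / h T v := hm'
      _ ≤ t T * h T u := by rw [div_le_iff₀ hv0]; nlinarith
  · obtain ⟨w, hMw, hw⟩ := (((hφ.mono_left nhdsWithin_le_nhds).eventually
      (gt_mem_nhds hM)).and (Ioo_mem_nhdsGT one_lt_two)).exists
    filter_upwards [(hquot w (by linarith [hw.1])).eventually (gt_mem_nhds hMw), habove w hw.1,
      hpos u hu, hpos w (by linarith [hw.1])] with T hM' hw1 hu0 hw0
    calc t T * h T u ≤ h T u / h T w := by rw [le_div_iff₀ hw0]; nlinarith
      _ < M := hM'

lemma tendsto_mul_one_sub_qtl {β : Type*} {l : Filter β} {G : β → ℝ → ℝ} {t : β → ℝ}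
    {a u : ℝ} (hG : ∀ᶠ T in l, Monotone (G T) ∧ Tendsto (G T) atTop (𝓝 1))
    (ht : ∀ᶠ T in l, 0 < t T) (hb : Tendsto (fun T => qtl (G T) (t T)) l atTop)
    (hpos : ∀ y > 0, ∀ᶠ T in l, 0 < 1 - G T (qtl (G T) (t T) * y))
    (hR : ∀ y > 0, Tendsto (fun T => (1 - G T (qtl (G T) (t T) * y)) /
      (1 - G T (qtl (G T) (t T)))) l (𝓝 (y ^ (-a)))) (hu : 0 < u) :
    Tendsto (fun T => t T * (1 - G T (qtl (G T) (t T) * u))) l (𝓝 (u ^ (-a))) := by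
  refine tendsto_mul_of_tendsto_ratio hpos (by simpa only [mul_one] using hR) ?_ ?_ hu
  · intro y hy
    filter_upwards [ht, hb.eventually_gt_atTop 0] with T htT hbT
    have := one_div_lt_one_sub_of_lt_qtl (G := G T) (mul_pos hbT hy.1)
      (mul_lt_of_lt_one_right hbT hy.2)
    rw [div_lt_iff₀ htT] at this
    linarith
  · intro y hy
    filter_upwards [hG, ht, hb.eventually_gt_atTop 0] with T ⟨hmono, hlim⟩ htT hbT
    have := one_sub_le_one_div_of_qtl_lt hmono hlim htT (lt_mul_of_one_lt_right hbT hy)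
    rwa [le_div_iff₀ htT, mul_comm] at this

section MixtureDistribution

variable {ι : Type*} [Fintype ι] {F : ι → ℝ → ℝ} {w : ι → ℝ}

lemma one_sub_mixture (hw1 : ∑ j, w j = 1) (x : ℝ) :
    1 - ∑ j, w j * F j x = ∑ j, w j * (1 - F j x) := by
  simp only [mul_one_sub, Finset.sum_sub_distrib, hw1]

lemma le_one_sub_mixture (hw0 : ∀ j, 0 ≤ w j) (hw1 : ∑ j, w j = 1) {m x : ℝ}
    (hm : ∀ j, m ≤ 1 - F j x) : m ≤ 1 - ∑ j, w j * F j x :=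
  calc m = ∑ j, w j * m := by rw [← Finset.sum_mul, hw1, one_mul]
    _ ≤ ∑ j, w j * (1 - F j x) :=
      Finset.sum_le_sum fun j _ => mul_le_mul_of_nonneg_left (hm j) (hw0 j)
    _ = 1 - ∑ j, w j * F j x := (one_sub_mixture hw1 x).symm

lemma monotone_mixture (hw0 : ∀ j, 0 ≤ w j) (hF : ∀ j, Monotone (F j)) :
    Monotone fun x => ∑ j, w j * F j x :=
  fun _ _ hxy => Finset.sum_le_sum fun j _ => mul_le_mul_of_nonneg_left (hF j hxy) (hw0 j)

lemma tendsto_mixture_atTop (hw1 : ∑ j, w j = 1) (hF : ∀ j, Tendsto (F j) atTop (𝓝 1)) :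
    Tendsto (fun x => ∑ j, w j * F j x) atTop (𝓝 1) := by
  simpa [hw1] using tendsto_finsetSum Finset.univ fun j _ => (hF j).const_mul (w j)

end MixtureDistribution

lemma exists_pos_le_of_liminf_iSup_pos {ι β : Type*} {l : Filter β} {P : ι → Prop}
    {w : β → ι → ℝ} (hw : ∀ᶠ T in l, ∀ j, 0 ≤ w T j)
    (hN : 0 < liminf (fun T => ⨆ j : {j // P j}, w T j.1) l) :
    ∃ c > 0, ∀ᶠ T in l, ∃ j, P j ∧ c ≤ w T j := by
  have hbdd : IsBoundedUnder (· ≥ ·) l fun T => ⨆ j : {j // P j}, w T j.1 :=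
    isBoundedUnder_of_eventually_ge (a := 0) <| by
      filter_upwards [hw] with T hT using Real.iSup_nonneg fun j => hT j.1
  refine ⟨_, half_pos hN, ?_⟩
  filter_upwards [eventually_lt_of_lt_liminf (half_lt_self hN) hbdd] with T hT
  rcases isEmpty_or_nonempty {j // P j} with hP | hP
  · rw [Real.iSup_of_isEmpty] at hT
    linarith
  · obtain ⟨j, hj⟩ := exists_lt_of_lt_ciSup hT
    exact ⟨j.1, j.2, hj.le⟩

lemma tendsto_mul_one_sub_mixture_qtl {ι β : Type*} [Fintype ι] [Nonempty ι] {l : Filter β}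
    {F : ι → ℝ → ℝ} {α : ι → ℝ} {αD : ℝ} {w : β → ι → ℝ} {t : β → ℝ}
    (hmono : ∀ j, Monotone (F j)) (htop : ∀ j, Tendsto (F j) atTop (𝓝 1))
    (htailpos : ∀ j, ∀ x > 0, F j x < 1)
    (hRV : ∀ j, ∀ x > 0,
      Tendsto (fun s => (1 - F j (s * x)) / (1 - F j s)) atTop (𝓝 (x ^ (-α j))))
    (hαD : ∀ j, αD ≤ α j) (hw : ∀ᶠ T in l, (∀ j, 0 ≤ w T j) ∧ ∑ j, w T j = 1)
    (hdom : ∃ c > 0, ∀ᶠ T in l, ∃ k, α k = αD ∧ c ≤ w T k) (ht : Tendsto t l atTop)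
    {u : ℝ} (hu : 0 < u) :
    Tendsto (fun T => t T * (1 - ∑ j, w T j *
      F j (qtl (fun x => ∑ i, w T i * F i x) (t T) * u))) l (𝓝 (u ^ (-αD))) := by
  have hG : ∀ᶠ T in l, Monotone (fun x => ∑ j, w T j * F j x) ∧
      Tendsto (fun x => ∑ j, w T j * F j x) atTop (𝓝 1) := by
    filter_upwards [hw] with T hwT
    exact ⟨monotone_mixture hwT.1 hmono, tendsto_mixture_atTop hwT.2 htop⟩
  have hmin : ∀ x > 0, ∃ m > 0, ∀ j, m ≤ 1 - F j x := fun x hx => by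
    obtain ⟨j, hj⟩ := Finite.exists_min fun j => 1 - F j x
    exact ⟨_, sub_pos.2 (htailpos j x hx), hj⟩
  have hb := tendsto_qtl_atTop ht hG fun x hx => by
    obtain ⟨m, hm, hmj⟩ := hmin x hx
    exact ⟨m, hm, by filter_upwards [hw] with T hwT using le_one_sub_mixture hwT.1 hwT.2 hmj⟩
  refine tendsto_mul_one_sub_qtl hG (ht.eventually_gt_atTop 0) hb (fun y hy => ?_)
    (fun y hy => ?_) hu
  · filter_upwards [hw, hb.eventually_gt_atTop 0] with T hwT hbT
    obtain ⟨m, hm, hmj⟩ := hmin _ (mul_pos hbT hy)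
    exact hm.trans_le (le_one_sub_mixture hwT.1 hwT.2 hmj)
  · refine (tendsto_mixture_tail_ratio (Fbar := fun j x => 1 - F j x)
      (fun j x hx => sub_pos.2 (htailpos j x hx)) (fun j _ _ h => sub_le_sub_left (hmono j h) 1)
      hRV hαD hw hdom hb hy).congr' ?_
    filter_upwards [hw] with T hwT
    rw [one_sub_mixture hwT.2, one_sub_mixture hwT.2]

theorem mixture_tail_at_quantile_general
    (p : ℕ) (F : Fin p → ℝ → ℝ) (α : Fin p → ℝ)
    (hmono : ∀ j, Monotone (F j))
    (htop : ∀ j, Tendsto (F j) atTop (𝓝 1))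
    (htailpos : ∀ j, ∀ x > (0 : ℝ), F j x < 1)
    (hRV : ∀ j, ∀ x > (0 : ℝ),
      Tendsto (fun s : ℝ => (1 - F j (s * x)) / (1 - F j s)) atTop (𝓝 (x ^ (-(α j)))))
    (lam : Fin p → ℝ → ℝ)
    (hlam : ∀ j, ∀ T > (0 : ℝ), 0 < lam j T)
    -- Condition (N)
    (hN : 0 < Filter.liminf
      (fun T : ℝ => ⨆ j : {j : Fin p // α j = ⨅ k, α k}, lam j.1 T / ∑ k, lam k T) atTop)
    (j0 : Fin p) (hj0 : Tendsto (fun T => lam j0 T * T) atTop atTop) :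
    ∀ u > (0 : ℝ),
      Tendsto
        (fun T : ℝ =>
          (∑ j, lam j T) * T *
            (1 - ∑ j, (lam j T / ∑ k, lam k T) *
              F j (qtl (fun x => ∑ i, (lam i T / ∑ k, lam k T) * F i x)
                     ((∑ i, lam i T) * T) * u)))
        atTop (𝓝 (u ^ (-(⨅ k, α k)))) := by
  have : Nonempty (Fin p) := ⟨j0⟩
  have hw : ∀ᶠ T in atTop, (∀ j, 0 ≤ lam j T / ∑ k, lam k T) ∧
      ∑ j, lam j T / ∑ k, lam k T = 1 := by
    filter_upwards [eventually_gt_atTop 0] with T hT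
    have hS : 0 < ∑ k, lam k T := Finset.sum_pos (fun k _ => hlam k T hT) Finset.univ_nonempty
    exact ⟨fun j => (div_pos (hlam j T hT) hS).le, by rw [← Finset.sum_div, div_self hS.ne']⟩
  have ht : Tendsto (fun T => (∑ j, lam j T) * T) atTop atTop := by
    refine tendsto_atTop_mono' atTop ?_ hj0
    filter_upwards [eventually_gt_atTop 0] with T hT
    exact mul_le_mul_of_nonneg_right
      (Finset.single_le_sum (fun j _ => (hlam j T hT).le) (Finset.mem_univ j0)) hT.le
  exact fun u hu => tendsto_mul_one_sub_mixture_qtl hmono htop htailpos hRV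
    (fun j => ciInf_le (Finite.bddBelow_range α) j) hw
    (exists_pos_le_of_liminf_iSup_pos (hw.mono fun T h => h.1) hN) ht hu

/-- Under the streams setup, Condition (N), and `λ_{j0}(T)·T → ∞` for some `j0`:
for every `u > 0`, `λ(T)·T·F̄_{D,T}(b_{D,T}(λ(T)T)·u) → u^{−α_D}` as `T → ∞`. -/
theorem mixture_tail_at_quantile
    (p : ℕ) (hp : 1 ≤ p) (F : Fin p → ℝ → ℝ) (α : Fin p → ℝ)
    (hα : ∀ j, 1 < α j ∧ α j < 2)
    (hmono : ∀ j, Monotone (F j))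
    (hzero : ∀ j, F j 0 = 0)
    (hnonneg : ∀ j x, 0 ≤ F j x)
    (hle_one : ∀ j x, F j x ≤ 1)
    (htop : ∀ j, Tendsto (F j) atTop (𝓝 1))
    (htailpos : ∀ j, ∀ x > (0 : ℝ), F j x < 1)
    (hRV : ∀ j, ∀ x > (0 : ℝ),
      Tendsto (fun s : ℝ => (1 - F j (s * x)) / (1 - F j s)) atTop (𝓝 (x ^ (-(α j)))))
    (lam : Fin p → ℝ → ℝ)
    (hlam : ∀ j, ∀ T > (0 : ℝ), 0 < lam j T)
    -- Condition (N)
    (hN : 0 < Filter.liminf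
      (fun T : ℝ => ⨆ j : {j : Fin p // α j = ⨅ k, α k}, lam j.1 T / ∑ k, lam k T) atTop)
    (j0 : Fin p) (hj0 : Tendsto (fun T => lam j0 T * T) atTop atTop) :
    ∀ u > (0 : ℝ),
      Tendsto
        (fun T : ℝ =>
          (∑ j, lam j T) * T *
            (1 - ∑ j, (lam j T / ∑ k, lam k T) *
              F j (qtl (fun x => ∑ i, (lam i T / ∑ k, lam k T) * F i x)
                     ((∑ i, lam i T) * T) * u)))
        atTop (𝓝 (u ^ (-(⨅ k, α k)))) :=
  mixture_tail_at_quantile_general p F α hmono htop htailpos hRV lam hlam hN j0 hj0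
end

section
/- Let 1 < γ < 2 and t1, t2 ≥ 0. Then ∫_{−∞}^{∞} ∫_0^{∞} L_{t1}(s−u, u)·1_{[0,t2]}(s)·u^{−γ} du ds = (1/((γ−1)(2−γ)(3−γ)))·( t2^{3−γ} − (t2−t1)^{3−γ} ) if t1 < t2, and = t2^{3−γ}/((γ−1)(2−γ)(3−γ)) if t1 ≥ t2. -/
open MeasureTheory Set

/-- `L_t(s,u)`: the Lebesgue measure of `[0,t] ∩ [s,s+u]`. -/
noncomputable def sessLen (t s u : ℝ) : ℝ :=
  (volume (Icc 0 t ∩ Icc s (s + u))).toReal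

/-!
For `0 ≤ s`, the overlap of `[0, t₁]` with `[s - u, s]` has length `min s u - min b u` where
`b = max (s - t₁) 0`, and `∫₀^∞ min a u · u^{-γ} du = a^{2-γ} / ((γ-1)(2-γ))` (split at `u = a`).
So the inner integral is `(s^{2-γ} - b^{2-γ}) / ((γ-1)(2-γ))`, and integrating this over
`s ∈ [0, t₂]` gives the claim, the term in `b` contributing only when `t₁ < t₂`.
-/

lemma sessLen_sub_eq_min_sub_min {t s : ℝ} (ht : 0 ≤ t) (hs : 0 ≤ s) (u : ℝ) :
    sessLen t (s - u) u = min s u - min (max (s - t) 0) u := by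
  rw [sessLen, sub_add_cancel, Icc_inter_Icc, Real.volume_Icc, ENNReal.toReal_ofReal']
  simp only [min_def, max_def]
  split_ifs <;> linarith

lemma min_mul_rpow_neg_of_le {a u : ℝ} (γ : ℝ) (hu : 0 < u) (hua : u ≤ a) :
    min a u * u ^ (-γ) = u ^ (1 - γ) := by
  rw [min_eq_right hua, sub_eq_add_neg, Real.rpow_add hu, Real.rpow_one]

section MinMulRpow

variable {a γ : ℝ}

lemma integrableOn_min_mul_rpow_neg (ha : 0 ≤ a) (hγ1 : 1 < γ) (hγ2 : γ < 2) :
    IntegrableOn (fun u => min a u * u ^ (-γ)) (Ioi 0) := by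
  rcases ha.eq_or_lt with rfl | ha
  · exact integrableOn_zero.congr_fun
      (fun u hu => by simp [min_eq_left (mem_Ioi.1 hu).le]) measurableSet_Ioi
  rw [← Ioc_union_Ioi_eq_Ioi ha.le]
  refine IntegrableOn.union ?_ ?_
  · exact ((intervalIntegrable_iff_integrableOn_Ioc_of_le ha.le).1
      (intervalIntegral.intervalIntegrable_rpow' (r := 1 - γ) (by linarith))).congr_fun
      (fun u hu => (min_mul_rpow_neg_of_le γ hu.1 hu.2).symm) measurableSet_Ioc
  · have htail : IntegrableOn (fun u => a * u ^ (-γ)) (Ioi a) :=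
      (integrableOn_Ioi_rpow_of_lt (by linarith) ha).const_mul a
    exact htail.congr_fun (fun u hu => by rw [min_eq_left (mem_Ioi.1 hu).le]) measurableSet_Ioi

lemma integral_min_mul_rpow_neg (ha : 0 ≤ a) (hγ1 : 1 < γ) (hγ2 : γ < 2) :
    ∫ u in Ioi 0, min a u * u ^ (-γ) = a ^ (2 - γ) / ((γ - 1) * (2 - γ)) := by
  have hint := integrableOn_min_mul_rpow_neg ha hγ1 hγ2
  have h1γ : 1 - γ ≠ 0 := by linarith
  have h2γ : 2 - γ ≠ 0 := by linarith
  have hγ1' : γ - 1 ≠ 0 := by linarith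
  rcases ha.eq_or_lt with rfl | ha
  · rw [setIntegral_congr_fun measurableSet_Ioi (g := fun _ => 0)
      (fun u hu => by simp [min_eq_left (mem_Ioi.1 hu).le])]
    simp [Real.zero_rpow h2γ]
  rw [← Ioc_union_Ioi_eq_Ioi ha.le, setIntegral_union (Ioc_disjoint_Ioi le_rfl) measurableSet_Ioi
      (hint.mono_set Ioc_subset_Ioi_self) (hint.mono_set (Ioi_subset_Ioi ha.le)),
    setIntegral_congr_fun measurableSet_Ioc (fun u hu => min_mul_rpow_neg_of_le γ hu.1 hu.2),
    setIntegral_congr_fun measurableSet_Ioi (g := fun u => a * u ^ (-γ))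
      (fun u hu => by rw [min_eq_left (mem_Ioi.1 hu).le]),
    integral_const_mul, integral_Ioi_rpow_of_lt (by linarith) ha,
    ← intervalIntegral.integral_of_le ha.le, integral_rpow (Or.inl (by linarith)),
    show 1 - γ + 1 = 2 - γ by ring, show -γ + 1 = 1 - γ by ring, Real.zero_rpow h2γ,
    show a ^ (2 - γ) = a * a ^ (1 - γ) by
      rw [show 2 - γ = 1 + (1 - γ) by ring, Real.rpow_add ha, Real.rpow_one]]
  field_simp
  ring

lemma integral_min_sub_min_mul_rpow_neg {b s : ℝ} (hb : 0 ≤ b) (hs : 0 ≤ s)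
    (hγ1 : 1 < γ) (hγ2 : γ < 2) :
    ∫ u in Ioi 0, (min s u - min b u) * u ^ (-γ)
      = (s ^ (2 - γ) - b ^ (2 - γ)) / ((γ - 1) * (2 - γ)) := by
  rw [sub_div, ← integral_min_mul_rpow_neg hs hγ1 hγ2, ← integral_min_mul_rpow_neg hb hγ1 hγ2,
    ← integral_sub (integrableOn_min_mul_rpow_neg hs hγ1 hγ2)
      (integrableOn_min_mul_rpow_neg hb hγ1 hγ2)]
  simp_rw [sub_mul]

end MinMulRpow

lemma continuous_max_sub_zero_rpow (a : ℝ) {p : ℝ} (hp : 0 ≤ p) :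
    Continuous fun s : ℝ => max (s - a) 0 ^ p :=
  (Real.continuous_rpow_const hp).comp (by fun_prop)

lemma integral_max_sub_zero_rpow {a p : ℝ} (ha : 0 ≤ a) (hp : 0 < p) (T : ℝ) :
    ∫ s in (0 : ℝ)..T, max (s - a) 0 ^ p = max (T - a) 0 ^ (p + 1) / (p + 1) := by
  have hcont := continuous_max_sub_zero_rpow a hp.le
  have hvanish : ∀ y ≤ a, ∫ s in (0 : ℝ)..y, max (s - a) 0 ^ p = 0 := fun y hy => by
    refine (intervalIntegral.integral_congr (g := fun _ => 0) fun s hs => ?_).trans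
      intervalIntegral.integral_zero
    have hsa : s ≤ a := (mem_uIcc.1 hs).elim (fun h => h.2.trans hy) (fun h => h.2.trans ha)
    simp [max_eq_right (sub_nonpos.2 hsa), Real.zero_rpow hp.ne']
  rcases lt_or_ge a T with haT | hTa
  · have hright : ∫ s in a..T, max (s - a) 0 ^ p = (T - a) ^ (p + 1) / (p + 1) := by
      rw [intervalIntegral.integral_congr (g := fun s => (s - a) ^ p) (fun s hs => by
          rw [uIcc_of_le haT.le] at hs; simp only [max_eq_left (sub_nonneg.2 hs.1)]),
        intervalIntegral.integral_comp_sub_right (fun x => x ^ p), sub_self,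
        integral_rpow (Or.inl (by linarith)), Real.zero_rpow (by linarith), sub_zero]
    rw [← intervalIntegral.integral_add_adjacent_intervals (b := a)
      (hcont.intervalIntegrable _ _) (hcont.intervalIntegrable _ _), hvanish a le_rfl,
      hright, zero_add, max_eq_left (by linarith)]
  · rw [hvanish T hTa, max_eq_right (by linarith), Real.zero_rpow (by linarith), zero_div]

/-- `∫_{−∞}^{∞} ∫_0^{∞} L_{t1}(s−u,u)·1_{[0,t2]}(s)·u^{−γ} du ds` equals
`(t2^{3−γ} − (t2−t1)^{3−γ})/((γ−1)(2−γ)(3−γ))` if `t1 < t2`,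
and `t2^{3−γ}/((γ−1)(2−γ)(3−γ))` if `t1 ≥ t2`. -/
theorem double_integral_sessLen (γ t1 t2 : ℝ)
    (hγ1 : 1 < γ) (hγ2 : γ < 2) (ht1 : 0 ≤ t1) (ht2 : 0 ≤ t2) :
    (∫ s : ℝ, ∫ u in Ioi (0 : ℝ),
        sessLen t1 (s - u) u * (Icc (0 : ℝ) t2).indicator (fun _ => (1 : ℝ)) s * u ^ (-γ))
      = (if t1 < t2 then t2 ^ (3 - γ) - (t2 - t1) ^ (3 - γ) else t2 ^ (3 - γ)) /
          ((γ - 1) * (2 - γ) * (3 - γ)) := by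
  have hp : 0 < 2 - γ := by linarith
  have hinner : (fun s : ℝ => ∫ u in Ioi (0 : ℝ),
        sessLen t1 (s - u) u * (Icc (0 : ℝ) t2).indicator (fun _ => (1 : ℝ)) s * u ^ (-γ))
      = (Icc 0 t2).indicator
          fun s => (s ^ (2 - γ) - max (s - t1) 0 ^ (2 - γ)) / ((γ - 1) * (2 - γ)) := by
    ext s
    by_cases hs : s ∈ Icc 0 t2
    · simp only [indicator_of_mem hs, mul_one, sessLen_sub_eq_min_sub_min ht1 hs.1]
      exact integral_min_sub_min_mul_rpow_neg (le_max_right _ _) hs.1 hγ1 hγ2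
    · simp [indicator_of_notMem hs]
  rw [hinner, integral_indicator measurableSet_Icc, integral_Icc_eq_integral_Ioc,
    ← intervalIntegral.integral_of_le ht2, intervalIntegral.integral_div,
    intervalIntegral.integral_sub (intervalIntegral.intervalIntegrable_rpow' (by linarith))
      ((continuous_max_sub_zero_rpow t1 hp.le).intervalIntegrable _ _),
    integral_rpow (Or.inl (by linarith)), integral_max_sub_zero_rpow ht1 hp,
    show 2 - γ + 1 = 3 - γ by ring, Real.zero_rpow (by linarith), sub_zero]
  split_ifs with h
  · rw [max_eq_left (by linarith)]
    field_simp
  · rw [max_eq_right (by linarith), Real.zero_rpow (by linarith), zero_div, sub_zero]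
    field_simp
end

section
/- Let 1 < α_D < α_R < 2, m ≥ 1, z_1,…,z_m ∈ ℝ and t_1,…,t_m ≥ 0. Then ∫_{−∞}^{∞} ∫_0^{∞} ∫_0^{∞} min( (Σ_{j=1}^m z_j r L_{t_j}(s,u))^2 , |Σ_{j=1}^m z_j r L_{t_j}(s,u)| ) ds · α_D u^{−(α_D+1)} du · α_R r^{−(α_R+1)} dr < ∞. -/
open MeasureTheory Set
open scoped ENNReal

lemma sessLen_nonneg (t s u : ℝ) : 0 ≤ sessLen t s u := ENNReal.toReal_nonneg

lemma sessLen_zero_of_lt (t s u : ℝ) (h : t < s) : sessLen t s u = 0 := by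
  have he : Icc 0 t ∩ Icc s (s + u) = ∅ := by
    ext x
    simp only [mem_inter_iff, mem_Icc, mem_empty_iff_false, iff_false]
    rintro ⟨⟨_, h1⟩, h2, _⟩
    linarith
  rw [sessLen, he]
  simp

lemma sessLen_zero_of_neg (t s u : ℝ) (h : s + u < 0) : sessLen t s u = 0 := by
  have he : Icc 0 t ∩ Icc s (s + u) = ∅ := by
    ext x
    simp only [mem_inter_iff, mem_Icc, mem_empty_iff_false, iff_false]
    rintro ⟨⟨h0, _⟩, _, h2⟩
    linarith
  rw [sessLen, he]
  simp

lemma sessLen_le_min (t s u : ℝ) (ht : 0 ≤ t) (hu : 0 ≤ u) : sessLen t s u ≤ min t u := by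
  apply le_min
  · calc sessLen t s u ≤ (volume (Icc 0 t)).toReal :=
        ENNReal.toReal_mono (by simp [Real.volume_Icc]) (measure_mono inter_subset_left)
      _ = t := by simp [Real.volume_Icc, ht]
  · calc sessLen t s u ≤ (volume (Icc s (s + u))).toReal :=
        ENNReal.toReal_mono (by simp [Real.volume_Icc]) (measure_mono inter_subset_right)
      _ = u := by simp [Real.volume_Icc, hu]

lemma min_sq_le_rpow (x p : ℝ) (hx : 0 ≤ x) (hp1 : 1 ≤ p) (hp2 : p ≤ 2) :
    min (x ^ 2) x ≤ x ^ p := by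
  rcases eq_or_lt_of_le hx with h0 | h0
  · rw [← h0, Real.zero_rpow (by linarith)]
    norm_num
  rcases le_total x 1 with hx1 | hx1
  · calc min (x ^ 2) x ≤ x ^ 2 := min_le_left _ _
      _ = x ^ (2 : ℝ) := by rw [← Real.rpow_natCast x 2]; norm_num
      _ ≤ x ^ p := Real.rpow_le_rpow_of_exponent_ge h0 hx1 hp2
  · calc min (x ^ 2) x ≤ x := min_le_right _ _
      _ = x ^ (1 : ℝ) := (Real.rpow_one x).symm
      _ ≤ x ^ p := Real.rpow_le_rpow_of_exponent_le hx1 hp1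

/-- Finiteness of the `u`-integral `∫ (T+u) (C min(T,u))^q αD u^{-(αD+1)} du`. -/
lemma Kfun_lt_top (T C αD q : ℝ) (hT : 0 < T) (hC : 0 ≤ C) (hαD : 1 < αD)
    (hq : αD < q) :
    (∫⁻ u in Ioi (0 : ℝ),
      ENNReal.ofReal ((T + u) * (C * min T u) ^ q * (αD * u ^ (-(αD + 1))))) < ⊤ := by
  rw [← Ioc_union_Ioi_eq_Ioi hT.le,
    lintegral_union measurableSet_Ioi (Ioc_disjoint_Ioi le_rfl)]
  have h1 : (∫⁻ u in Ioc (0 : ℝ) T,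
      ENNReal.ofReal ((T + u) * (C * min T u) ^ q * (αD * u ^ (-(αD + 1))))) < ⊤ := by
    have hb : ∀ u ∈ Ioc (0 : ℝ) T,
        ENNReal.ofReal ((T + u) * (C * min T u) ^ q * (αD * u ^ (-(αD + 1))))
          ≤ ENNReal.ofReal ((2 * T * C ^ q * αD) * u ^ (q - αD - 1)) := by
      rintro u ⟨hu0, huT⟩
      apply ENNReal.ofReal_le_ofReal
      have hmin : min T u = u := min_eq_right huT
      calc (T + u) * (C * min T u) ^ q * (αD * u ^ (-(αD + 1)))
          ≤ (2 * T) * (C * u) ^ q * (αD * u ^ (-(αD + 1))) := by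
            rw [hmin]; gcongr <;> first | positivity | linarith
        _ = (2 * T * C ^ q * αD) * u ^ (q - αD - 1) := by
            rw [Real.mul_rpow hC hu0.le,
              show q - αD - 1 = q + -(αD + 1) by ring, Real.rpow_add hu0]
            ring
    refine lt_of_le_of_lt (setLIntegral_mono' measurableSet_Ioc hb) ?_
    have hInt : IntegrableOn (fun u : ℝ => (2 * T * C ^ q * αD) * u ^ (q - αD - 1))
        (Ioc (0 : ℝ) T) := by
      have h := (intervalIntegral.intervalIntegrable_rpow' (a := 0) (b := T)
        (show (-1 : ℝ) < q - αD - 1 by linarith)).const_mul (2 * T * C ^ q * αD)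
      rwa [intervalIntegrable_iff, uIoc_of_le hT.le] at h
    exact hInt.setLIntegral_lt_top
  have h2 : (∫⁻ u in Ioi T,
      ENNReal.ofReal ((T + u) * (C * min T u) ^ q * (αD * u ^ (-(αD + 1))))) < ⊤ := by
    have hb : ∀ u ∈ Ioi T,
        ENNReal.ofReal ((T + u) * (C * min T u) ^ q * (αD * u ^ (-(αD + 1))))
          ≤ ENNReal.ofReal ((2 * (C * T) ^ q * αD) * u ^ (-αD)) := by
      intro u hu
      have hu0 : 0 < u := hT.trans hu
      apply ENNReal.ofReal_le_ofReal
      have hmin : min T u = T := min_eq_left (le_of_lt hu)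
      calc (T + u) * (C * min T u) ^ q * (αD * u ^ (-(αD + 1)))
          ≤ (2 * u) * (C * T) ^ q * (αD * u ^ (-(αD + 1))) := by
            rw [hmin]; gcongr <;> first | positivity | linarith [mem_Ioi.mp hu]
        _ = (2 * (C * T) ^ q * αD) * (u ^ (1 : ℝ) * u ^ (-(αD + 1))) := by
            rw [Real.rpow_one]; ring
        _ = (2 * (C * T) ^ q * αD) * u ^ (-αD) := by
            rw [← Real.rpow_add hu0]; norm_num
    refine lt_of_le_of_lt (setLIntegral_mono' measurableSet_Ioi hb) ?_
    have hInt : IntegrableOn (fun u : ℝ => (2 * (C * T) ^ q * αD) * u ^ (-αD)) (Ioi T) :=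
      ((integrableOn_Ioi_rpow_iff hT).2 (by linarith)).const_mul _
    exact hInt.setLIntegral_lt_top
  exact ENNReal.add_lt_top.mpr ⟨h1, h2⟩

/-- Bound on the inner `s`-integral. -/
lemma inner_s_le (m : ℕ) (z t : Fin m → ℝ) (ht : ∀ j, 0 ≤ t j)
    (T C : ℝ) (hT : 0 < T) (hTj : ∀ j, t j ≤ T) (hC : C = ∑ j, |z j|)
    (u r : ℝ) (hu : 0 < u) (hr : 0 < r) :
    (∫⁻ s : ℝ, ENNReal.ofReal
        (min ((∑ j, z j * r * sessLen (t j) s u) ^ 2)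
             |∑ j, z j * r * sessLen (t j) s u|))
      ≤ ENNReal.ofReal (T + u) *
        ENNReal.ofReal (min ((r * (C * min T u)) ^ 2) (r * (C * min T u))) := by
  have hC0 : 0 ≤ C := hC ▸ Finset.sum_nonneg fun j _ => abs_nonneg _
  have hpt : ∀ s : ℝ, ENNReal.ofReal (min ((∑ j, z j * r * sessLen (t j) s u) ^ 2)
        |∑ j, z j * r * sessLen (t j) s u|)
      ≤ (Icc (-u) T).indicator
          (fun _ => ENNReal.ofReal (min ((r * (C * min T u)) ^ 2) (r * (C * min T u)))) s := by
    intro s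
    by_cases hs : s ∈ Icc (-u) T
    · rw [indicator_of_mem hs]
      apply ENNReal.ofReal_le_ofReal
      have hF : |∑ j, z j * r * sessLen (t j) s u| ≤ r * (C * min T u) := by
        calc |∑ j, z j * r * sessLen (t j) s u|
            ≤ ∑ j, |z j * r * sessLen (t j) s u| := Finset.abs_sum_le_sum_abs _ _
          _ ≤ ∑ j, |z j| * (r * min T u) := by
              apply Finset.sum_le_sum
              intro j _
              rw [abs_mul, abs_mul, abs_of_pos hr, abs_of_nonneg (sessLen_nonneg _ _ _),
                mul_assoc]
              gcongr
              exact le_trans (sessLen_le_min _ s u (ht j) hu.le)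
                (min_le_min (hTj j) le_rfl)
          _ = r * (C * min T u) := by rw [← Finset.sum_mul, ← hC]; ring
      calc min ((∑ j, z j * r * sessLen (t j) s u) ^ 2)
            |∑ j, z j * r * sessLen (t j) s u|
          = min (|∑ j, z j * r * sessLen (t j) s u| ^ 2)
            |∑ j, z j * r * sessLen (t j) s u| := by rw [sq_abs]
        _ ≤ min ((r * (C * min T u)) ^ 2) (r * (C * min T u)) :=
            min_le_min (pow_le_pow_left₀ (abs_nonneg _) hF 2) hF
    · rw [indicator_of_notMem hs]
      simp only [mem_Icc, not_and_or, not_le] at hs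
      have hz : ∀ j, sessLen (t j) s u = 0 := by
        intro j
        rcases hs with h | h
        · exact sessLen_zero_of_neg _ _ _ (by linarith)
        · exact sessLen_zero_of_lt _ _ _ (lt_of_le_of_lt (hTj j) h)
      simp [hz]
  calc (∫⁻ s : ℝ, ENNReal.ofReal
        (min ((∑ j, z j * r * sessLen (t j) s u) ^ 2)
             |∑ j, z j * r * sessLen (t j) s u|))
      ≤ ∫⁻ s : ℝ, (Icc (-u) T).indicator
          (fun _ => ENNReal.ofReal (min ((r * (C * min T u)) ^ 2) (r * (C * min T u)))) s :=
        lintegral_mono hpt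
    _ = ∫⁻ _ in Icc (-u) T,
          ENNReal.ofReal (min ((r * (C * min T u)) ^ 2) (r * (C * min T u))) :=
        lintegral_indicator measurableSet_Icc _
    _ = ENNReal.ofReal (min ((r * (C * min T u)) ^ 2) (r * (C * min T u)))
          * ENNReal.ofReal (T + u) := by
        rw [setLIntegral_const, Real.volume_Icc]
        congr 1
        ring_nf
    _ = ENNReal.ofReal (T + u) *
        ENNReal.ofReal (min ((r * (C * min T u)) ^ 2) (r * (C * min T u))) := mul_comm _ _

/-- For `1 < α_D < α_R < 2`, the integral of
`min((Σ_j z_j r L_{t_j}(s,u))², |Σ_j z_j r L_{t_j}(s,u)|)` with respect to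
`ds · α_D u^{−(α_D+1)} du · α_R r^{−(α_R+1)} dr` is finite. -/
theorem min_sq_abs_integral_finite_powerlaw
    (αD αR : ℝ) (h1 : 1 < αD) (h2 : αD < αR) (h3 : αR < 2)
    (m : ℕ) (hm : 1 ≤ m) (z t : Fin m → ℝ) (ht : ∀ j, 0 ≤ t j) :
    (∫⁻ r in Ioi (0 : ℝ),
      (∫⁻ u in Ioi (0 : ℝ),
        (∫⁻ s : ℝ, ENNReal.ofReal
            (min ((∑ j, z j * r * sessLen (t j) s u) ^ 2)
                 |∑ j, z j * r * sessLen (t j) s u|))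
          * ENNReal.ofReal (αD * u ^ (-(αD + 1))))
        * ENNReal.ofReal (αR * r ^ (-(αR + 1)))) < ⊤ := by
  set T : ℝ := (∑ j, t j) + 1 with hTdef
  have hsum : 0 ≤ ∑ j, t j := Finset.sum_nonneg fun j _ => ht j
  have hT : 0 < T := by rw [hTdef]; linarith
  have hTj : ∀ j, t j ≤ T := by
    intro j
    have := Finset.single_le_sum (f := t) (fun i _ => ht i) (Finset.mem_univ j)
    rw [hTdef]; linarith
  set C : ℝ := ∑ j, |z j| with hCdef
  have hC : 0 ≤ C := Finset.sum_nonneg fun j _ => abs_nonneg _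
  set p : ℝ := (αD + αR) / 2 with hpdef
  have hp1 : 1 ≤ p := by rw [hpdef]; linarith
  have hp2 : p ≤ 2 := by rw [hpdef]; linarith
  have hpD : αD < p := by rw [hpdef]; linarith
  have hpR : p < αR := by rw [hpdef]; linarith
  -- the key bound on the `u`-integral, for each fixed `r > 0`
  have key : ∀ q : ℝ, 1 ≤ q → q ≤ 2 → ∀ r : ℝ, 0 < r →
      (∫⁻ u in Ioi (0 : ℝ),
        (∫⁻ s : ℝ, ENNReal.ofReal
            (min ((∑ j, z j * r * sessLen (t j) s u) ^ 2)
                 |∑ j, z j * r * sessLen (t j) s u|))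
          * ENNReal.ofReal (αD * u ^ (-(αD + 1))))
        ≤ ENNReal.ofReal (r ^ q) *
          (∫⁻ u in Ioi (0 : ℝ),
            ENNReal.ofReal ((T + u) * (C * min T u) ^ q * (αD * u ^ (-(αD + 1))))) := by
    intro q hq1 hq2 r hr
    rw [← lintegral_const_mul' _ _ ENNReal.ofReal_ne_top]
    apply setLIntegral_mono' measurableSet_Ioi
    intro u hu
    have hu0 : 0 < u := mem_Ioi.mp hu
    have hmin0 : 0 ≤ min T u := le_min hT.le hu0.le
    have hM : 0 ≤ r * (C * min T u) := mul_nonneg hr.le (mul_nonneg hC hmin0)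
    calc (∫⁻ s : ℝ, ENNReal.ofReal
            (min ((∑ j, z j * r * sessLen (t j) s u) ^ 2)
                 |∑ j, z j * r * sessLen (t j) s u|))
          * ENNReal.ofReal (αD * u ^ (-(αD + 1)))
        ≤ (ENNReal.ofReal (T + u) *
            ENNReal.ofReal (min ((r * (C * min T u)) ^ 2) (r * (C * min T u))))
            * ENNReal.ofReal (αD * u ^ (-(αD + 1))) := by
          gcongr
          exact inner_s_le m z t ht T C hT hTj hCdef u r hu0 hr
      _ ≤ (ENNReal.ofReal (T + u) * ENNReal.ofReal ((r * (C * min T u)) ^ q))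
            * ENNReal.ofReal (αD * u ^ (-(αD + 1))) := by
          gcongr
          exact min_sq_le_rpow _ q hM hq1 hq2
      _ = ENNReal.ofReal (r ^ q) *
          ENNReal.ofReal ((T + u) * (C * min T u) ^ q * (αD * u ^ (-(αD + 1)))) := by
          rw [Real.mul_rpow hr.le (mul_nonneg hC hmin0),
            ← ENNReal.ofReal_mul (by positivity : (0:ℝ) ≤ T + u),
            ← ENNReal.ofReal_mul (by positivity),
            ← ENNReal.ofReal_mul (by positivity)]
          congr 1
          ring
  have hK2 : (∫⁻ u in Ioi (0 : ℝ),
      ENNReal.ofReal ((T + u) * (C * min T u) ^ (2:ℝ) * (αD * u ^ (-(αD + 1))))) < ⊤ :=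
    Kfun_lt_top T C αD 2 hT hC h1 (by linarith)
  have hKp : (∫⁻ u in Ioi (0 : ℝ),
      ENNReal.ofReal ((T + u) * (C * min T u) ^ p * (αD * u ^ (-(αD + 1))))) < ⊤ :=
    Kfun_lt_top T C αD p hT hC h1 hpD
  have hsplit : (∫⁻ r in Ioi (0 : ℝ),
      (∫⁻ u in Ioi (0 : ℝ),
        (∫⁻ s : ℝ, ENNReal.ofReal
            (min ((∑ j, z j * r * sessLen (t j) s u) ^ 2)
                 |∑ j, z j * r * sessLen (t j) s u|))
          * ENNReal.ofReal (αD * u ^ (-(αD + 1))))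
        * ENNReal.ofReal (αR * r ^ (-(αR + 1))))
      = ∫⁻ r in Ioc (0:ℝ) 1 ∪ Ioi (1:ℝ),
      (∫⁻ u in Ioi (0 : ℝ),
        (∫⁻ s : ℝ, ENNReal.ofReal
            (min ((∑ j, z j * r * sessLen (t j) s u) ^ 2)
                 |∑ j, z j * r * sessLen (t j) s u|))
          * ENNReal.ofReal (αD * u ^ (-(αD + 1))))
        * ENNReal.ofReal (αR * r ^ (-(αR + 1))) := by
    rw [Ioc_union_Ioi_eq_Ioi (zero_le_one : (0:ℝ) ≤ 1)]
  rw [hsplit, lintegral_union measurableSet_Ioi (Ioc_disjoint_Ioi le_rfl)]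
  rw [ENNReal.add_lt_top]
  constructor
  · -- small r : use the quadratic bound
    have hb : ∀ r ∈ Ioc (0:ℝ) 1,
        (∫⁻ u in Ioi (0 : ℝ),
          (∫⁻ s : ℝ, ENNReal.ofReal
              (min ((∑ j, z j * r * sessLen (t j) s u) ^ 2)
                   |∑ j, z j * r * sessLen (t j) s u|))
            * ENNReal.ofReal (αD * u ^ (-(αD + 1))))
          * ENNReal.ofReal (αR * r ^ (-(αR + 1)))
        ≤ (∫⁻ u in Ioi (0 : ℝ),
            ENNReal.ofReal ((T + u) * (C * min T u) ^ (2:ℝ) * (αD * u ^ (-(αD + 1)))))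
          * ENNReal.ofReal (αR * r ^ (2 - αR - 1)) := by
      intro r hr
      have hr0 : 0 < r := hr.1
      calc (∫⁻ u in Ioi (0 : ℝ),
          (∫⁻ s : ℝ, ENNReal.ofReal
              (min ((∑ j, z j * r * sessLen (t j) s u) ^ 2)
                   |∑ j, z j * r * sessLen (t j) s u|))
            * ENNReal.ofReal (αD * u ^ (-(αD + 1))))
          * ENNReal.ofReal (αR * r ^ (-(αR + 1)))
          ≤ (ENNReal.ofReal (r ^ (2:ℝ)) *
              (∫⁻ u in Ioi (0 : ℝ),
                ENNReal.ofReal ((T + u) * (C * min T u) ^ (2:ℝ) * (αD * u ^ (-(αD + 1))))))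
              * ENNReal.ofReal (αR * r ^ (-(αR + 1))) := by
            gcongr
            exact key 2 one_le_two le_rfl r hr0
        _ = (∫⁻ u in Ioi (0 : ℝ),
              ENNReal.ofReal ((T + u) * (C * min T u) ^ (2:ℝ) * (αD * u ^ (-(αD + 1)))))
            * (ENNReal.ofReal (r ^ (2:ℝ)) * ENNReal.ofReal (αR * r ^ (-(αR + 1)))) := by
            ring
        _ = (∫⁻ u in Ioi (0 : ℝ),
              ENNReal.ofReal ((T + u) * (C * min T u) ^ (2:ℝ) * (αD * u ^ (-(αD + 1)))))
            * ENNReal.ofReal (αR * r ^ (2 - αR - 1)) := by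
            rw [← ENNReal.ofReal_mul (by positivity),
              show (2:ℝ) - αR - 1 = 2 + -(αR + 1) by ring, Real.rpow_add hr0]
            congr 1
            ring
    refine lt_of_le_of_lt (setLIntegral_mono' measurableSet_Ioc hb) ?_
    rw [lintegral_const_mul' _ _ (ne_of_lt hK2)]
    refine ENNReal.mul_lt_top hK2 ?_
    have hInt : IntegrableOn (fun r : ℝ => αR * r ^ (2 - αR - 1)) (Ioc (0:ℝ) 1) := by
      have h := (intervalIntegral.intervalIntegrable_rpow' (a := 0) (b := 1)
        (show (-1 : ℝ) < 2 - αR - 1 by linarith)).const_mul αR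
      rwa [intervalIntegrable_iff, uIoc_of_le zero_le_one] at h
    exact hInt.setLIntegral_lt_top
  · -- large r : use the `p`-power bound
    have hb : ∀ r ∈ Ioi (1:ℝ),
        (∫⁻ u in Ioi (0 : ℝ),
          (∫⁻ s : ℝ, ENNReal.ofReal
              (min ((∑ j, z j * r * sessLen (t j) s u) ^ 2)
                   |∑ j, z j * r * sessLen (t j) s u|))
            * ENNReal.ofReal (αD * u ^ (-(αD + 1))))
          * ENNReal.ofReal (αR * r ^ (-(αR + 1)))
        ≤ (∫⁻ u in Ioi (0 : ℝ),
            ENNReal.ofReal ((T + u) * (C * min T u) ^ p * (αD * u ^ (-(αD + 1)))))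
          * ENNReal.ofReal (αR * r ^ (p - αR - 1)) := by
      intro r hr
      have hr0 : 0 < r := lt_trans one_pos (mem_Ioi.mp hr)
      calc (∫⁻ u in Ioi (0 : ℝ),
          (∫⁻ s : ℝ, ENNReal.ofReal
              (min ((∑ j, z j * r * sessLen (t j) s u) ^ 2)
                   |∑ j, z j * r * sessLen (t j) s u|))
            * ENNReal.ofReal (αD * u ^ (-(αD + 1))))
          * ENNReal.ofReal (αR * r ^ (-(αR + 1)))
          ≤ (ENNReal.ofReal (r ^ p) *
              (∫⁻ u in Ioi (0 : ℝ),
                ENNReal.ofReal ((T + u) * (C * min T u) ^ p * (αD * u ^ (-(αD + 1))))))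
              * ENNReal.ofReal (αR * r ^ (-(αR + 1))) := by
            gcongr
            exact key p hp1 hp2 r hr0
        _ = (∫⁻ u in Ioi (0 : ℝ),
              ENNReal.ofReal ((T + u) * (C * min T u) ^ p * (αD * u ^ (-(αD + 1)))))
            * (ENNReal.ofReal (r ^ p) * ENNReal.ofReal (αR * r ^ (-(αR + 1)))) := by
            ring
        _ = (∫⁻ u in Ioi (0 : ℝ),
              ENNReal.ofReal ((T + u) * (C * min T u) ^ p * (αD * u ^ (-(αD + 1)))))
            * ENNReal.ofReal (αR * r ^ (p - αR - 1)) := by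
            rw [← ENNReal.ofReal_mul (by positivity),
              show p - αR - 1 = p + -(αR + 1) by ring, Real.rpow_add hr0]
            congr 1
            ring
    refine lt_of_le_of_lt (setLIntegral_mono' measurableSet_Ioi hb) ?_
    rw [lintegral_const_mul' _ _ (ne_of_lt hKp)]
    refine ENNReal.mul_lt_top hKp ?_
    have hInt : IntegrableOn (fun r : ℝ => αR * r ^ (p - αR - 1)) (Ioi (1:ℝ)) :=
      ((integrableOn_Ioi_rpow_iff one_pos).2 (by linarith)).const_mul αR
    exact hInt.setLIntegral_lt_top
end
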